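/- arXiv:1607.08511 — 9 statements merged into one kernel-verified Lean document; each statement's English description precedes it below -/
import Mathlib

section
/- Let f : U → ℝᵐ be a smooth immersion of a connected open set U ⊆ ℝⁿ such that f(u) ∈ T_u and f(u) ≠ 0 for every u ∈ U. Fix u₀ ∈ U and let X₀ ∈ ℝⁿ be a vector with fderiv ℝ f u₀ X₀ = f(u₀)/‖f(u₀)‖. Then the derivative at u₀ of the unit position field e₁ : v ↦ f(v)/‖f(v)‖ in the direction X₀ vanishes: fderiv ℝ (fun v => ‖f v‖⁻¹ • f v) u₀ X₀ = 0. (The key step in the proof of Lemma 3.1: ∇̃_{e₁} e₁ = 0, so the integral curves of e₁ are straight line segments through the origin.) -/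
open scoped RealInnerProductSpace

/-- Orthogonal projection of `v` onto the tangent space `T_u = range (fderiv ℝ f u)`. -/
noncomputable def tangentProj {n m : ℕ}
    (f : EuclideanSpace ℝ (Fin n) → EuclideanSpace ℝ (Fin m))
    (u : EuclideanSpace ℝ (Fin n)) (v : EuclideanSpace ℝ (Fin m)) :
    EuclideanSpace ℝ (Fin m) :=
  (Submodule.orthogonalProjectionOnto (LinearMap.range (fderiv ℝ f u : EuclideanSpace ℝ (Fin n) →ₗ[ℝ] EuclideanSpace ℝ (Fin m))) v : EuclideanSpace ℝ (Fin m))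

/-- Tangential component `x^T(u)` of the position vector. -/
noncomputable def posT {n m : ℕ}
    (f : EuclideanSpace ℝ (Fin n) → EuclideanSpace ℝ (Fin m))
    (u : EuclideanSpace ℝ (Fin n)) : EuclideanSpace ℝ (Fin m) :=
  tangentProj f u (f u)

/-- Normal component `x^N(u)` of the position vector. -/
noncomputable def posN {n m : ℕ}
    (f : EuclideanSpace ℝ (Fin n) → EuclideanSpace ℝ (Fin m))
    (u : EuclideanSpace ℝ (Fin n)) : EuclideanSpace ℝ (Fin m) :=
  f u - tangentProj f u (f u)

/-- Second fundamental form `h_u(X,Y)`: the normal component of the second derivative. -/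
noncomputable def sff {n m : ℕ}
    (f : EuclideanSpace ℝ (Fin n) → EuclideanSpace ℝ (Fin m))
    (u X Y : EuclideanSpace ℝ (Fin n)) : EuclideanSpace ℝ (Fin m) :=
  fderiv ℝ (fderiv ℝ f) u X Y - tangentProj f u (fderiv ℝ (fderiv ℝ f) u X Y)

/-- **Key step in the proof of Lemma 3.1.** If the position vector of a smooth immersion
`f : U → ℝᵐ` is everywhere tangential and nonzero, and `X₀` is a tangent vector at `u₀`
pushed forward to the unit position vector `f u₀ / ‖f u₀‖`, then the ambient derivative of
the unit position field `e₁ : v ↦ f v / ‖f v‖` in the direction `X₀` vanishes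
(`∇̃_{e₁} e₁ = 0`). -/
theorem stmt_2 {n m : ℕ} (hn : 0 < n) (hnm : n < m)
    (U : Set (EuclideanSpace ℝ (Fin n))) (hU : IsOpen U) (hUconn : IsConnected U)
    (f : EuclideanSpace ℝ (Fin n) → EuclideanSpace ℝ (Fin m))
    (hf : ContDiffOn ℝ (⊤ : ℕ∞) f U)
    (himm : ∀ u ∈ U, Function.Injective (fderiv ℝ f u))
    (htan : ∀ u ∈ U, f u ∈ LinearMap.range (fderiv ℝ f u : EuclideanSpace ℝ (Fin n) →ₗ[ℝ] EuclideanSpace ℝ (Fin m)))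
    (hne : ∀ u ∈ U, f u ≠ 0)
    (u₀ : EuclideanSpace ℝ (Fin n)) (hu₀ : u₀ ∈ U)
    (X₀ : EuclideanSpace ℝ (Fin n))
    (hX₀ : fderiv ℝ f u₀ X₀ = ‖f u₀‖⁻¹ • f u₀) :
    fderiv ℝ (fun v => ‖f v‖⁻¹ • f v) u₀ X₀ = 0 := by
  have hf0 : f u₀ ≠ 0 := hne u₀ hu₀
  have hr : ‖f u₀‖ ≠ 0 := norm_ne_zero_iff.2 hf0
  set F := fderiv ℝ f u₀ with hFdef
  have hF : HasFDerivAt f F u₀ :=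
    ((hf.contDiffAt (hU.mem_nhds hu₀)).differentiableAt (by simp)).hasFDerivAt
  have h2 : HasFDerivAt (fun v => ‖f v‖ ^ 2) (2 • (innerSL ℝ (f u₀)).comp F) u₀ := hF.norm_sq
  have hsq : ‖f u₀‖ ^ 2 ≠ 0 := pow_ne_zero _ hr
  have hsqrt : Real.sqrt (‖f u₀‖ ^ 2) = ‖f u₀‖ := Real.sqrt_sq (norm_nonneg _)
  have h3 : HasDerivAt (fun t => (Real.sqrt t)⁻¹)
      (-(1 / (2 * Real.sqrt (‖f u₀‖ ^ 2))) / Real.sqrt (‖f u₀‖ ^ 2) ^ 2) (‖f u₀‖ ^ 2) :=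
    (Real.hasDerivAt_sqrt hsq).inv (by rw [hsqrt]; exact hr)
  have h4 : HasFDerivAt (fun v => ‖f v‖⁻¹)
      ((-(1 / (2 * Real.sqrt (‖f u₀‖ ^ 2))) / Real.sqrt (‖f u₀‖ ^ 2) ^ 2) •
        (2 • (innerSL ℝ (f u₀)).comp F)) u₀ := by
    have := h3.comp_hasFDerivAt u₀ h2
    exact this.congr_of_eventuallyEq (Filter.Eventually.of_forall fun v => by
      simp [Function.comp, Real.sqrt_sq (norm_nonneg _)])
  have h5 : HasFDerivAt (fun v => ‖f v‖⁻¹ • f v) _ u₀ := h4.smul hF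
  rw [h5.fderiv]
  simp only [ContinuousLinearMap.add_apply, ContinuousLinearMap.smul_apply,
    ContinuousLinearMap.smulRight_apply, ContinuousLinearMap.smul_apply,
    smul_smul, ContinuousLinearMap.comp_apply, innerSL_apply_apply, hsqrt]
  rw [hX₀, real_inner_smul_right, real_inner_self_eq_norm_sq, smul_smul, nsmul_eq_mul, ← add_smul]
  convert zero_smul ℝ (f u₀)
  field_simp
  simp only [smul_eq_mul, Nat.cast_ofNat]
  field_simp
  ring
end

section
/- Let f : U → ℝᵐ be a smooth immersion of a connected open set U ⊆ ℝⁿ whose position vector has nowhere vanishing normal component, i.e. x^N(u) ≠ 0 for every u ∈ U. Then f is rectifying if and only if the tangential position field x^T is a concurrent vector field on M, i.e. for every u ∈ U and every X ∈ ℝⁿ the tangential component of the ambient directional derivative of x^T equals the push-forward of X: P_u( fderiv ℝ (fun v => x^T(v)) u X ) = fderiv ℝ f u X. (Theorem 4.1: a Euclidean submanifold with x^N ≠ 0 is a proper rectifying submanifold if and only if x^T is a concurrent vector field, where concurrency ∇_X x^T = X for the induced Levi-Civita connection is expressed via the tangential projection of the ambient derivative.) -/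
open ContinuousLinearMap


open scoped RealInnerProductSpace

variable {n m : ℕ}

lemma aux_isUnit (A : EuclideanSpace ℝ (Fin n) →L[ℝ] EuclideanSpace ℝ (Fin m))
    (hA : Function.Injective A) : IsUnit ((adjoint A) ∘L A) := by
  rw [ContinuousLinearMap.isUnit_iff_bijective]
  have hinj : Function.Injective ((adjoint A) ∘L A) := by
    have hker : ∀ z, ((adjoint A) ∘L A) z = 0 → z = 0 := by
      intro z hz
      have h1 : ⟪A z, A z⟫ = 0 := by
        have := congrArg (fun w => (⟪w, z⟫ : ℝ)) hz
        simpa [ContinuousLinearMap.adjoint_inner_left] using this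
      have : A z = 0 := inner_self_eq_zero.mp h1
      exact hA (by simpa using this)
    intro x y hxy
    have := hker (x - y) (by simp [map_sub, hxy])
    exact sub_eq_zero.mp this
  exact ⟨hinj, (LinearMap.injective_iff_surjective (f := ((adjoint A) ∘L A).toLinearMap)).mp hinj⟩

lemma aux_key (A : EuclideanSpace ℝ (Fin n) →L[ℝ] EuclideanSpace ℝ (Fin m))
    (hA : Function.Injective A) (y : EuclideanSpace ℝ (Fin n)) :
    ((adjoint A) ∘L A) (Ring.inverse ((adjoint A) ∘L A) y) = y := by
  have h := Ring.mul_inverse_cancel _ (aux_isUnit A hA)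
  have := congrFun (congrArg (fun T : EuclideanSpace ℝ (Fin n) →L[ℝ] EuclideanSpace ℝ (Fin n) => (T : _ → _)) h) y
  simpa [ContinuousLinearMap.mul_apply] using this

lemma aux_proj (A : EuclideanSpace ℝ (Fin n) →L[ℝ] EuclideanSpace ℝ (Fin m))
    (hA : Function.Injective A) (w : EuclideanSpace ℝ (Fin m)) :
    (Submodule.orthogonalProjectionOnto (LinearMap.range
      (A : EuclideanSpace ℝ (Fin n) →ₗ[ℝ] EuclideanSpace ℝ (Fin m))) w : EuclideanSpace ℝ (Fin m))
      = A (Ring.inverse ((adjoint A) ∘L A) ((adjoint A) w)) := by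
  rw [Submodule.coe_orthogonalProjectionOnto_apply]
  apply Submodule.eq_starProjection_of_mem_of_inner_eq_zero
  · exact LinearMap.mem_range_self _ _
  · rintro t ⟨y, rfl⟩
    have h1 : (⟪w, A y⟫ : ℝ) = ⟪(adjoint A) w, y⟫ := (ContinuousLinearMap.adjoint_inner_left A y w).symm
    have h2 : (⟪A (Ring.inverse ((adjoint A) ∘L A) ((adjoint A) w)), A y⟫ : ℝ)
        = ⟪(adjoint A) w, y⟫ := by
      rw [← ContinuousLinearMap.adjoint_inner_left A y]
      have := aux_key A hA ((adjoint A) w)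
      simp only [ContinuousLinearMap.comp_apply] at this ⊢
      rw [this]
    rw [ContinuousLinearMap.coe_coe, inner_sub_left, h1, h2, sub_self]

lemma aux_diffN (U : Set (EuclideanSpace ℝ (Fin n))) (hU : IsOpen U)
    (f : EuclideanSpace ℝ (Fin n) → EuclideanSpace ℝ (Fin m))
    (hf : ContDiffOn ℝ (⊤ : ℕ∞) f U)
    (himm : ∀ u ∈ U, Function.Injective (fderiv ℝ f u))
    {u : EuclideanSpace ℝ (Fin n)} (hu : u ∈ U) :
    DifferentiableAt ℝ (fun v => posN f v) u := by
  have hcf : ContDiffAt ℝ (⊤ : ℕ∞) f u := hf.contDiffAt (hU.mem_nhds hu)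
  have hfd : DifferentiableAt ℝ f u := hcf.differentiableAt (by simp)
  have hF : DifferentiableAt ℝ (fderiv ℝ f) u :=
    (hcf.fderiv_right (m := (⊤ : ℕ∞)) (by simp)).differentiableAt (by simp)
  have hAdj : DifferentiableAt ℝ (fun v => adjoint (fderiv ℝ f v)) u := by
    let L : (EuclideanSpace ℝ (Fin n) →L[ℝ] EuclideanSpace ℝ (Fin m)) →ₗ[ℝ]
        (EuclideanSpace ℝ (Fin m) →L[ℝ] EuclideanSpace ℝ (Fin n)) :=
      { toFun := fun A => adjoint A
        map_add' := by intro A B; simp [map_add]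
        map_smul' := by intro c A; simp }
    exact (LinearMap.toContinuousLinearMap L).differentiableAt.comp u hF
  have hB : DifferentiableAt ℝ (fun v => (adjoint (fderiv ℝ f v)) ∘L (fderiv ℝ f v)) u :=
    hAdj.clm_comp hF
  have hInv : DifferentiableAt ℝ
      (fun v => Ring.inverse ((adjoint (fderiv ℝ f v)) ∘L (fderiv ℝ f v))) u :=
    hB.inverse (aux_isUnit _ (himm u hu))
  have hAw : DifferentiableAt ℝ (fun v => (adjoint (fderiv ℝ f v)) (f v)) u :=
    hAdj.clm_apply hfd
  have hg : DifferentiableAt ℝ (fun v =>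
      f v - (fderiv ℝ f v) (Ring.inverse ((adjoint (fderiv ℝ f v)) ∘L (fderiv ℝ f v))
        ((adjoint (fderiv ℝ f v)) (f v)))) u :=
    hfd.sub (hF.clm_apply (hInv.clm_apply hAw))
  apply hg.congr_of_eventuallyEq
  filter_upwards [hU.mem_nhds hu] with v hv
  simp only [posN, tangentProj]
  rw [aux_proj _ (himm v hv)]

lemma aux_K (U : Set (EuclideanSpace ℝ (Fin n))) (hU : IsOpen U)
    (f : EuclideanSpace ℝ (Fin n) → EuclideanSpace ℝ (Fin m))
    (hf : ContDiffOn ℝ (⊤ : ℕ∞) f U)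
    (himm : ∀ u ∈ U, Function.Injective (fderiv ℝ f u))
    {u : EuclideanSpace ℝ (Fin n)} (hu : u ∈ U)
    (X Y : EuclideanSpace ℝ (Fin n)) :
    (⟪fderiv ℝ (posN f) u X, fderiv ℝ f u Y⟫ : ℝ)
      + ⟪posN f u, fderiv ℝ (fderiv ℝ f) u X Y⟫ = 0 := by
  have hcf : ContDiffAt ℝ (⊤ : ℕ∞) f u := hf.contDiffAt (hU.mem_nhds hu)
  have hF : DifferentiableAt ℝ (fderiv ℝ f) u :=
    (hcf.fderiv_right (m := (⊤ : ℕ∞)) (by simp)).differentiableAt (by simp)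
  have hNdiff : DifferentiableAt ℝ (posN f) u := aux_diffN U hU f hf himm hu
  have hFY : DifferentiableAt ℝ (fun v => fderiv ℝ f v Y) u :=
    hF.clm_apply (differentiableAt_const Y)
  have hev : (fun v => (⟪posN f v, fderiv ℝ f v Y⟫ : ℝ)) =ᶠ[nhds u] (fun _ => (0 : ℝ)) := by
    filter_upwards [hU.mem_nhds hu] with v hv
    have h1 : posN f v ∈ (LinearMap.range
        (fderiv ℝ f v : EuclideanSpace ℝ (Fin n) →ₗ[ℝ] EuclideanSpace ℝ (Fin m)))ᗮ :=
      Submodule.sub_starProjection_mem_orthogonal (f v)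
    have h2 : fderiv ℝ f v Y ∈ LinearMap.range
        (fderiv ℝ f v : EuclideanSpace ℝ (Fin n) →ₗ[ℝ] EuclideanSpace ℝ (Fin m)) :=
      LinearMap.mem_range_self _ _
    have := h1 _ h2
    rwa [real_inner_comm] at this
  have hzero : fderiv ℝ (fun v => (⟪posN f v, fderiv ℝ f v Y⟫ : ℝ)) u = 0 := by
    rw [hev.fderiv_eq]; exact fderiv_const_apply 0
  have happ := fderiv_inner_apply (𝕜 := ℝ) hNdiff hFY X
  have hD2 : fderiv ℝ (fun v => fderiv ℝ f v Y) u X = fderiv ℝ (fderiv ℝ f) u X Y := by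
    rw [fderiv_clm_apply hF (differentiableAt_const Y)]
    simp
  rw [hzero] at happ
  rw [hD2] at happ
  simp only [ContinuousLinearMap.zero_apply] at happ
  linarith [happ]

theorem stmt_4' (U : Set (EuclideanSpace ℝ (Fin n))) (hU : IsOpen U)
    (f : EuclideanSpace ℝ (Fin n) → EuclideanSpace ℝ (Fin m))
    (hf : ContDiffOn ℝ (⊤ : ℕ∞) f U)
    (himm : ∀ u ∈ U, Function.Injective (fderiv ℝ f u)) :
    (∀ u ∈ U, ∀ X Y : EuclideanSpace ℝ (Fin n), ⟪f u, sff f u X Y⟫ = 0) ↔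
      (∀ u ∈ U, ∀ X : EuclideanSpace ℝ (Fin n),
        tangentProj f u (fderiv ℝ (fun v => posT f v) u X) = fderiv ℝ f u X) := by
  have lemC : ∀ u ∈ U, ∀ X Y : EuclideanSpace ℝ (Fin n),
      (⟪f u, sff f u X Y⟫ : ℝ) = ⟪posN f u, fderiv ℝ (fderiv ℝ f) u X Y⟫ := by
    intro u hu X Y
    set K := LinearMap.range (fderiv ℝ f u : EuclideanSpace ℝ (Fin n) →ₗ[ℝ] EuclideanSpace ℝ (Fin m))
    have hsffo : sff f u X Y ∈ Kᗮ := Submodule.sub_starProjection_mem_orthogonal _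
    have hTmem : posT f u ∈ K := (K.orthogonalProjectionOnto (f u)).2
    have hNo : posN f u ∈ Kᗮ := Submodule.sub_starProjection_mem_orthogonal (f u)
    have hfu : f u = posT f u + posN f u := by
      simp [posT, posN, tangentProj]
    rw [hfu, inner_add_left]
    have h1 : (⟪posT f u, sff f u X Y⟫ : ℝ) = 0 := hsffo _ hTmem
    have h2 : (⟪posN f u, tangentProj f u (fderiv ℝ (fderiv ℝ f) u X Y)⟫ : ℝ) = 0 := by
      have hmem : tangentProj f u (fderiv ℝ (fderiv ℝ f) u X Y) ∈ K :=
        (K.orthogonalProjectionOnto _).2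
      have := hNo _ hmem
      rwa [real_inner_comm] at this
    rw [h1]
    show (0 : ℝ) + ⟪posN f u, sff f u X Y⟫ = _
    rw [zero_add]
    unfold sff
    rw [inner_sub_right, h2, sub_zero]
  have lemAB : ∀ u ∈ U, ∀ X : EuclideanSpace ℝ (Fin n),
      ((∀ Y, (⟪posN f u, fderiv ℝ (fderiv ℝ f) u X Y⟫ : ℝ) = 0) ↔
        tangentProj f u (fderiv ℝ (fun v => posT f v) u X) = fderiv ℝ f u X) := by
    intro u hu X
    set K := LinearMap.range (fderiv ℝ f u : EuclideanSpace ℝ (Fin n) →ₗ[ℝ] EuclideanSpace ℝ (Fin m)) with hK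
    have hcf : ContDiffAt ℝ (⊤ : ℕ∞) f u := hf.contDiffAt (hU.mem_nhds hu)
    have hfd : DifferentiableAt ℝ f u := hcf.differentiableAt (by simp)
    have hNdiff : DifferentiableAt ℝ (posN f) u := aux_diffN U hU f hf himm hu
    have hTeq : (fun v => posT f v) = fun v => f v - posN f v := by
      funext v; simp [posT, posN, tangentProj]
    have hder : fderiv ℝ (fun v => posT f v) u X
        = fderiv ℝ f u X - fderiv ℝ (posN f) u X := by
      rw [hTeq, fderiv_fun_sub hfd hNdiff]; rfl
    have htp_df : tangentProj f u (fderiv ℝ f u X) = fderiv ℝ f u X :=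
      Submodule.starProjection_eq_self_iff.mpr ⟨X, rfl⟩
    have htp_sub : tangentProj f u (fderiv ℝ f u X - fderiv ℝ (posN f) u X)
        = fderiv ℝ f u X - tangentProj f u (fderiv ℝ (posN f) u X) := by
      simp only [tangentProj] at htp_df ⊢
      rw [map_sub, Submodule.coe_sub, htp_df]
    have hPN0 : (∀ Y, (⟪posN f u, fderiv ℝ (fderiv ℝ f) u X Y⟫ : ℝ) = 0) ↔
        tangentProj f u (fderiv ℝ (posN f) u X) = 0 := by
      constructor
      · intro h
        have hmem : fderiv ℝ (posN f) u X ∈ Kᗮ := by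
          rintro t ⟨Y, rfl⟩
          have hk := aux_K U hU f hf himm hu X Y
          rw [h Y, add_zero] at hk
          rwa [real_inner_comm]
        simp only [tangentProj]
        rw [Submodule.coe_eq_zero, Submodule.orthogonalProjectionOnto_eq_zero_iff]
        exact hmem
      · intro h Y
        have hmem : fderiv ℝ (posN f) u X ∈ Kᗮ := by
          rw [← Submodule.orthogonalProjectionOnto_eq_zero_iff (K := K), ← Submodule.coe_eq_zero]
          exact h
        have h0 : (⟪fderiv ℝ (posN f) u X, fderiv ℝ f u Y⟫ : ℝ) = 0 := by
          have := hmem _ (LinearMap.mem_range_self _ Y)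
          rwa [real_inner_comm] at this
        have hk := aux_K U hU f hf himm hu X Y
        rw [h0, zero_add] at hk
        exact hk
    rw [hder, htp_sub]
    rw [hPN0]
    constructor
    · intro h; rw [h, sub_zero]
    · intro h
      have := sub_eq_self.mp h
      exact this
  constructor
  · intro hrect u hu X
    exact (lemAB u hu X).mp (fun Y => by rw [← lemC u hu X Y]; exact hrect u hu X Y)
  · intro hconc u hu X Y
    rw [lemC u hu X Y]
    exact ((lemAB u hu X).mpr (hconc u hu X)) Y

/-- **Theorem 4.1.** A smooth immersion `f : U → ℝᵐ` with nowhere-zero normal position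
component `x^N` is (proper) rectifying if and only if the tangential position field `x^T`
is a concurrent vector field: the tangential component of the ambient derivative of `x^T`
in any direction `X` equals the push-forward `fderiv ℝ f u X` of `X`. -/

theorem stmt_4 {n m : ℕ} (hn : 0 < n) (hnm : n < m)
    (U : Set (EuclideanSpace ℝ (Fin n))) (hU : IsOpen U) (hUconn : IsConnected U)
    (f : EuclideanSpace ℝ (Fin n) → EuclideanSpace ℝ (Fin m))
    (hf : ContDiffOn ℝ (⊤ : ℕ∞) f U)
    (himm : ∀ u ∈ U, Function.Injective (fderiv ℝ f u))
    (hN : ∀ u ∈ U, posN f u ≠ 0) :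
    (∀ u ∈ U, ∀ X Y : EuclideanSpace ℝ (Fin n), ⟪f u, sff f u X Y⟫ = 0) ↔
      (∀ u ∈ U, ∀ X : EuclideanSpace ℝ (Fin n),
        tangentProj f u (fderiv ℝ (fun v => posT f v) u X) = fderiv ℝ f u X) := by
  exact stmt_4' U hU f hf himm
end

section
/- Let f : U → ℝᵐ be a smooth immersion of a connected open set U ⊆ ℝⁿ. Then f is rectifying if and only if the shape operator in the direction of the normal position field vanishes identically, i.e. for every u ∈ U and every X ∈ ℝⁿ the ambient directional derivative of the normal field x^N is itself a normal vector: P_u( fderiv ℝ (fun v => x^N(v)) u X ) = 0. (Equation (4.11) and Theorem 5.1(d): f is rectifying if and only if A_{x^N} = 0.) -/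
open scoped RealInnerProductSpace

section Aux
open ContinuousLinearMap

variable {E F : Type*} [NormedAddCommGroup E] [InnerProductSpace ℝ E] [FiniteDimensional ℝ E]
  [NormedAddCommGroup F] [InnerProductSpace ℝ F] [FiniteDimensional ℝ F]

lemma adjoint_iblm : IsBoundedLinearMap ℝ (fun A : E →L[ℝ] F => ContinuousLinearMap.adjoint A) := by
  refine ⟨⟨fun A B => map_add _ _ _, fun c A => by simp⟩, 1, one_pos, fun A => ?_⟩
  simp [ContinuousLinearMap.adjoint.norm_map]

lemma gram_isUnit {L : E →L[ℝ] F} (hL : Function.Injective L) :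
    IsUnit ((ContinuousLinearMap.adjoint L).comp L) := by
  rw [ContinuousLinearMap.isUnit_iff_bijective]
  have hinj : Function.Injective ((ContinuousLinearMap.adjoint L).comp L) := by
    intro x y h
    have h3 : ⟪((ContinuousLinearMap.adjoint L).comp L) (x - y), x - y⟫ = 0 := by
      rw [map_sub, h, sub_self]; simp
    rw [ContinuousLinearMap.comp_apply, ContinuousLinearMap.adjoint_inner_left,
      inner_self_eq_zero] at h3
    have := hL (h3.trans (map_zero L).symm)
    exact sub_eq_zero.mp this
  exact ⟨hinj, LinearMap.injective_iff_surjective.mp hinj⟩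

lemma proj_formula {L : E →L[ℝ] F} (hL : Function.Injective L) (v : F) :
    (Submodule.orthogonalProjectionOnto (LinearMap.range (L : E →ₗ[ℝ] F)) v : F) =
      L (Ring.inverse ((ContinuousLinearMap.adjoint L).comp L)
        (ContinuousLinearMap.adjoint L v)) := by
  have hG := gram_isUnit hL
  apply Submodule.eq_starProjection_of_mem_orthogonal
  · exact LinearMap.mem_range_self _ _
  · rw [Submodule.mem_orthogonal]
    rintro w ⟨x, rfl⟩
    rw [ContinuousLinearMap.coe_coe, real_inner_comm, inner_sub_left, ← ContinuousLinearMap.adjoint_inner_left L,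
      ← ContinuousLinearMap.adjoint_inner_left L]
    have h1 : (ContinuousLinearMap.adjoint L).comp L *
        Ring.inverse ((ContinuousLinearMap.adjoint L).comp L) = 1 :=
      Ring.mul_inverse_cancel _ hG
    have h2 := DFunLike.congr_fun h1 (ContinuousLinearMap.adjoint L v)
    rw [ContinuousLinearMap.mul_apply, ContinuousLinearMap.one_apply,
      ContinuousLinearMap.comp_apply] at h2
    rw [h2, sub_self]


end Aux


/-- **Equation (4.11) / Theorem 5.1(d).** A smooth immersion `f : U → ℝᵐ` is rectifying
if and only if the shape operator in the direction of the normal position field vanishes,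
i.e. the tangential component of the ambient derivative of `x^N` is zero in every
direction at every point (`A_{x^N} = 0`). -/
theorem stmt_5 {n m : ℕ} (hn : 0 < n) (hnm : n < m)
    (U : Set (EuclideanSpace ℝ (Fin n))) (hU : IsOpen U) (hUconn : IsConnected U)
    (f : EuclideanSpace ℝ (Fin n) → EuclideanSpace ℝ (Fin m))
    (hf : ContDiffOn ℝ (⊤ : ℕ∞) f U)
    (himm : ∀ u ∈ U, Function.Injective (fderiv ℝ f u)) :
    (∀ u ∈ U, ∀ X Y : EuclideanSpace ℝ (Fin n), ⟪f u, sff f u X Y⟫ = 0) ↔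
      (∀ u ∈ U, ∀ X : EuclideanSpace ℝ (Fin n),
        tangentProj f u (fderiv ℝ (fun v => posN f v) u X) = 0) := by
  have key : ∀ u ∈ U, ∀ X : EuclideanSpace ℝ (Fin n),
      ((∀ Y, ⟪f u, sff f u X Y⟫ = 0) ↔
        tangentProj f u (fderiv ℝ (fun v => posN f v) u X) = 0) := by
    intro u hu X
    have hmemU : U ∈ nhds u := hU.mem_nhds hu
    have hDcd : ContDiffOn ℝ (⊤ : ℕ∞) (fderiv ℝ f) U := hf.fderiv_of_isOpen hU (by simp)
    have hDat : ContDiffAt ℝ (⊤ : ℕ∞) (fderiv ℝ f) u := hDcd.contDiffAt hmemU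
    have hfat : ContDiffAt ℝ (⊤ : ℕ∞) f u := hf.contDiffAt hmemU
    -- smoothness of the projection formula
    have hadjat : ContDiffAt ℝ (⊤ : ℕ∞)
        (fun v => ContinuousLinearMap.adjoint (fderiv ℝ f v)) u :=
      (adjoint_iblm.contDiff).contDiffAt.comp u hDat
    have hGat : ContDiffAt ℝ (⊤ : ℕ∞)
        (fun v => (ContinuousLinearMap.adjoint (fderiv ℝ f v)).comp (fderiv ℝ f v)) u :=
      hadjat.clm_comp hDat
    have hGu : IsUnit ((ContinuousLinearMap.adjoint (fderiv ℝ f u)).comp (fderiv ℝ f u)) :=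
      gram_isUnit (himm u hu)
    have hinvat : ContDiffAt ℝ (⊤ : ℕ∞) (fun v =>
        Ring.inverse ((ContinuousLinearMap.adjoint (fderiv ℝ f v)).comp (fderiv ℝ f v))) u := by
      have hR : ContDiffAt ℝ (⊤ : ℕ∞) Ring.inverse
          ((ContinuousLinearMap.adjoint (fderiv ℝ f u)).comp (fderiv ℝ f u)) := by
        have := contDiffAt_ringInverse ℝ (n := (⊤ : ℕ∞)) hGu.unit
        rwa [hGu.unit_spec] at this
      exact hR.comp u hGat
    set g : EuclideanSpace ℝ (Fin n) → EuclideanSpace ℝ (Fin m) := fun v =>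
      fderiv ℝ f v (Ring.inverse
        ((ContinuousLinearMap.adjoint (fderiv ℝ f v)).comp (fderiv ℝ f v))
        (ContinuousLinearMap.adjoint (fderiv ℝ f v) (f v))) with hg_def
    have hgdiff : DifferentiableAt ℝ g u := by
      apply DifferentiableAt.clm_apply (hDat.differentiableAt (by simp))
      apply DifferentiableAt.clm_apply (hinvat.differentiableAt (by simp))
      exact DifferentiableAt.clm_apply (hadjat.differentiableAt (by simp))
        (hfat.differentiableAt (by simp))
    have hproj_eq : ∀ v ∈ U, tangentProj f v (f v) = g v := fun v hv =>
      proj_formula (himm v hv) (f v)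
    have hNev : posN f =ᶠ[nhds u] fun v => f v - g v := by
      filter_upwards [hmemU] with v hv
      rw [posN, hproj_eq v hv]
    have hNdiff : DifferentiableAt ℝ (posN f) u :=
      (((hfat.differentiableAt (by simp)).sub hgdiff)).congr_of_eventuallyEq hNev
    -- the Weingarten-type identity
    have hkey : ∀ Y, ⟪posN f u, fderiv ℝ (fderiv ℝ f) u X Y⟫
        + ⟪fderiv ℝ (posN f) u X, fderiv ℝ f u Y⟫ = 0 := by
      intro Y
      have hDYdiff : DifferentiableAt ℝ (fun v => fderiv ℝ f v Y) u :=
        (hDat.differentiableAt (by simp)).clm_apply (differentiableAt_const Y)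
      have hphi : (fun v => ⟪posN f v, fderiv ℝ f v Y⟫) =ᶠ[nhds u]
          fun _ => (0 : ℝ) := by
        filter_upwards [hmemU] with v hv
        have hmem : posN f v ∈ (LinearMap.range (fderiv ℝ f v : EuclideanSpace ℝ (Fin n) →ₗ[ℝ] EuclideanSpace ℝ (Fin m)))ᗮ :=
          Submodule.sub_starProjection_mem_orthogonal (f v)
        have := (Submodule.mem_orthogonal _ _).mp hmem (fderiv ℝ f v Y)
          (LinearMap.mem_range_self _ Y)
        rw [real_inner_comm] at this
        exact this
      have hz : fderiv ℝ (fun v => ⟪posN f v, fderiv ℝ f v Y⟫) u = 0 := by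
        rw [hphi.fderiv_eq]; exact fderiv_const_apply 0
      have h1 := fderiv_inner_apply ℝ hNdiff hDYdiff X
      rw [hz] at h1
      have h2 : fderiv ℝ (fun v => fderiv ℝ f v Y) u X
          = fderiv ℝ (fderiv ℝ f) u X Y := by
        rw [fderiv_clm_apply (hDat.differentiableAt (by simp)) (differentiableAt_const Y)]
        simp
      rw [h2] at h1
      simpa using h1.symm
    -- rewrite LHS inner product
    have hsff : ∀ Y, ⟪f u, sff f u X Y⟫
        = ⟪posN f u, fderiv ℝ (fderiv ℝ f) u X Y⟫ := by
      intro Y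
      simp only [sff, posN, tangentProj]
      simp only [← Submodule.starProjection_apply]
      rw [inner_sub_right, inner_sub_left, Submodule.inner_starProjection_left_eq_right]
    constructor
    · intro h
      have horth : fderiv ℝ (posN f) u X ∈ (LinearMap.range (fderiv ℝ f u : EuclideanSpace ℝ (Fin n) →ₗ[ℝ] EuclideanSpace ℝ (Fin m)))ᗮ := by
        rw [Submodule.mem_orthogonal]
        rintro w ⟨Y, rfl⟩
        rw [real_inner_comm]
        have := hkey Y
        rw [← hsff Y, h Y, zero_add] at this
        exact this
      rw [tangentProj]
      rw [Submodule.orthogonalProjectionOnto_apply_of_mem_orthogonal horth]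
      rfl
    · intro h Y
      have horth : fderiv ℝ (posN f) u X ∈ (LinearMap.range (fderiv ℝ f u : EuclideanSpace ℝ (Fin n) →ₗ[ℝ] EuclideanSpace ℝ (Fin m)))ᗮ := by
        have hsub := Submodule.sub_starProjection_mem_orthogonal
          (K := LinearMap.range (fderiv ℝ f u : EuclideanSpace ℝ (Fin n) →ₗ[ℝ] EuclideanSpace ℝ (Fin m))) (fderiv ℝ (posN f) u X)
        rw [show (((LinearMap.range (fderiv ℝ f u : EuclideanSpace ℝ (Fin n) →ₗ[ℝ] EuclideanSpace ℝ (Fin m))).starProjection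
          (fderiv ℝ (posN f) u X)) : EuclideanSpace ℝ (Fin m))
          = tangentProj f u (fderiv ℝ (fun v => posN f v) u X) from rfl, h, sub_zero] at hsub
        exact hsub
      have hz := (Submodule.mem_orthogonal _ _).mp horth (fderiv ℝ f u Y)
        (LinearMap.mem_range_self _ Y)
      rw [real_inner_comm] at hz
      have := hkey Y
      rw [hz, add_zero] at this
      rw [hsff Y]
      exact this
  constructor
  · intro h u hu X
    exact (key u hu X).mp (h u hu X)
  · intro h u hu X Y
    exact (key u hu X).mpr (h u hu X) Y
end

section
/- Let f : U → ℝᵐ be a proper rectifying smooth immersion of a connected open set U ⊆ ℝⁿ. Then the normal component of the position vector has constant length: there exists a constant c > 0 such that ‖x^N(u)‖ = c for all u ∈ U. (Theorem 5.1(c).) -/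
open scoped RealInnerProductSpace

/-- A locally constant function on a connected set is constant. -/
-- constancy lemma
lemma loc_const_of_connected {α : Type*} [TopologicalSpace α] {U : Set α} (hconn : IsConnected U)
    (g : α → ℝ)
    (hloc : ∀ u ∈ U, ∃ s, IsOpen s ∧ u ∈ s ∧ s ⊆ U ∧ ∀ v ∈ s, g v = g u)
    {u₀ : α} (hu₀ : u₀ ∈ U) : ∀ u ∈ U, g u = g u₀ := by
  classical
  set S : Set α := ⋃₀ {s | IsOpen s ∧ s ⊆ U ∧ ∀ v ∈ s, g v = g u₀} with hS
  set T : Set α := ⋃₀ {s | IsOpen s ∧ s ⊆ U ∧ ∀ v ∈ s, g v ≠ g u₀} with hT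
  have hSopen : IsOpen S := isOpen_sUnion fun s hs => hs.1
  have hTopen : IsOpen T := isOpen_sUnion fun s hs => hs.1
  have hcover : U ⊆ S ∪ T := by
    intro u hu
    obtain ⟨s, hso, hus, hsU, hconst⟩ := hloc u hu
    by_cases h : g u = g u₀
    · exact Or.inl ⟨s, ⟨hso, hsU, fun v hv => (hconst v hv).trans h⟩, hus⟩
    · exact Or.inr ⟨s, ⟨hso, hsU, fun v hv => (hconst v hv).symm ▸ h⟩, hus⟩
  have hSne : (U ∩ S).Nonempty := by
    obtain ⟨s, hso, hus, hsU, hconst⟩ := hloc u₀ hu₀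
    exact ⟨u₀, hu₀, ⟨s, ⟨hso, hsU, hconst⟩, hus⟩⟩
  intro u hu
  by_contra hne
  have hTne : (U ∩ T).Nonempty := by
    obtain ⟨s, hso, hus, hsU, hconst⟩ := hloc u hu
    exact ⟨u, hu, ⟨s, ⟨hso, hsU, fun v hv => (hconst v hv).symm ▸ hne⟩, hus⟩⟩
  obtain ⟨w, hwU, hwS, hwT⟩ := hconn.isPreconnected S T hSopen hTopen hcover hSne hTne
  obtain ⟨s₁, hs₁, hw₁⟩ := hwS
  obtain ⟨s₂, hs₂, hw₂⟩ := hwT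
  exact hs₂.2.2 w hw₂ (hs₁.2.2 w hw₁)


set_option maxHeartbeats 2000000 in
/-- **Theorem 5.1(c).** For a proper rectifying smooth immersion `f : U → ℝᵐ` of a
connected open set, the normal component `x^N` of the position vector has constant
positive length on `U`. -/
theorem stmt_7 {n m : ℕ} (hn : 0 < n) (hnm : n < m)
    (U : Set (EuclideanSpace ℝ (Fin n))) (hU : IsOpen U) (hUconn : IsConnected U)
    (f : EuclideanSpace ℝ (Fin n) → EuclideanSpace ℝ (Fin m))
    (hf : ContDiffOn ℝ (⊤ : ℕ∞) f U)
    (himm : ∀ u ∈ U, Function.Injective (fderiv ℝ f u))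
    (hrect : ∀ u ∈ U, ∀ X Y : EuclideanSpace ℝ (Fin n), ⟪f u, sff f u X Y⟫ = 0)
    (hT : ∀ u ∈ U, posT f u ≠ 0) (hN : ∀ u ∈ U, posN f u ≠ 0) :
    ∃ c : ℝ, 0 < c ∧ ∀ u ∈ U, ‖posN f u‖ = c := by
  classical
  obtain ⟨u₀, hu₀⟩ := hUconn.nonempty
  set A : EuclideanSpace ℝ (Fin n) → (EuclideanSpace ℝ (Fin n) →L[ℝ] EuclideanSpace ℝ (Fin m)) :=
    fun u => fderiv ℝ f u with hAdef
  set T : EuclideanSpace ℝ (Fin n) → (EuclideanSpace ℝ (Fin n) →L[ℝ] EuclideanSpace ℝ (Fin n)) :=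
    fun u => (ContinuousLinearMap.adjoint (A u)).comp (A u) with hTdef
  -- smoothness of A on U
  have hA : ContDiffOn ℝ (⊤ : ℕ∞) A U := hf.fderiv_of_isOpen hU (by simp)
  -- adjoint smooth
  have hadj : ContDiff ℝ (⊤ : ℕ∞) (ContinuousLinearMap.adjoint :
      (EuclideanSpace ℝ (Fin n) →L[ℝ] EuclideanSpace ℝ (Fin m)) →
      (EuclideanSpace ℝ (Fin m) →L[ℝ] EuclideanSpace ℝ (Fin n))) := by
    apply IsBoundedLinearMap.contDiff
    refine ⟨⟨fun B₁ B₂ => map_add _ _ _, fun c B => ?_⟩, 1, one_pos, fun B => ?_⟩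
    · simp [map_smulₛₗ, starRingEnd_apply]
    · simp
  -- T u is a unit for u ∈ U
  have hTunit : ∀ u ∈ U, IsUnit (T u) := by
    intro u hu
    have hinj : Function.Injective (T u) := by
      have h : ∀ x, T u x = 0 → x = 0 := by
        intro x hx
        have h1 : ⟪A u x, A u x⟫ = 0 := by
          rw [← ContinuousLinearMap.adjoint_inner_left]
          show ⟪T u x, x⟫ = 0
          rw [hx, inner_zero_left]
        have h2 : A u x = 0 := inner_self_eq_zero.mp h1
        exact himm u hu (by simpa [hAdef] using h2.trans (map_zero (A u)).symm)
      intro x y hxy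
      exact sub_eq_zero.mp (h (x - y) (by rw [map_sub, hxy, sub_self]))
    have hbij : Function.Bijective (T u) :=
      ⟨hinj, LinearMap.surjective_of_injective (f := (T u : EuclideanSpace ℝ (Fin n) →ₗ[ℝ] EuclideanSpace ℝ (Fin n))) hinj⟩
    let e : EuclideanSpace ℝ (Fin n) ≃ₗ[ℝ] EuclideanSpace ℝ (Fin n) :=
      LinearEquiv.ofBijective ((T u : _ →ₗ[ℝ] _)) hbij
    refine ⟨e.toContinuousLinearEquiv.toUnit, ?_⟩
    ext x; rfl
  -- xi
  set ξ : EuclideanSpace ℝ (Fin n) → EuclideanSpace ℝ (Fin n) :=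
    fun u => Ring.inverse (T u) (ContinuousLinearMap.adjoint (A u) (f u)) with hξdef
  -- differentiability pieces at u ∈ U
  have hcd : ∀ u ∈ U, ContDiffAt ℝ (⊤ : ℕ∞) f u ∧ ContDiffAt ℝ (⊤ : ℕ∞) A u ∧ ContDiffAt ℝ (⊤ : ℕ∞) ξ u := by
    intro u hu
    have hfA : ContDiffAt ℝ (⊤ : ℕ∞) f u := (hf u hu).contDiffAt (hU.mem_nhds hu)
    have hAA : ContDiffAt ℝ (⊤ : ℕ∞) A u := (hA u hu).contDiffAt (hU.mem_nhds hu)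
    have hadjA : ContDiffAt ℝ (⊤ : ℕ∞) (fun v => ContinuousLinearMap.adjoint (A v)) u :=
      hadj.contDiffAt.comp u hAA
    have hTA : ContDiffAt ℝ (⊤ : ℕ∞) T u := hadjA.clm_comp hAA
    have hinv : ContDiffAt ℝ (⊤ : ℕ∞) (fun v => Ring.inverse (T v)) u := by
      have := (contDiffAt_ringInverse (𝕜 := ℝ) (n := (⊤ : ℕ∞)) (R := EuclideanSpace ℝ (Fin n) →L[ℝ] EuclideanSpace ℝ (Fin n)) (hTunit u hu).unit)
      rw [(hTunit u hu).unit_spec] at this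
      exact this.comp u hTA
    exact ⟨hfA, hAA, hinv.clm_apply (hadjA.clm_apply hfA)⟩
  -- orthogonality of the residual to the tangent space
  have horth : ∀ u ∈ U, ∀ y, ⟪f u - A u (ξ u), A u y⟫ = 0 := by
    intro u hu y
    have key : ContinuousLinearMap.adjoint (A u) (f u - A u (ξ u)) = 0 := by
      rw [map_sub]
      have h2 : ContinuousLinearMap.adjoint (A u) (A u (ξ u)) = T u (ξ u) := rfl
      rw [h2, hξdef]
      have hmul : T u (Ring.inverse (T u) (ContinuousLinearMap.adjoint (A u) (f u)))
          = ContinuousLinearMap.adjoint (A u) (f u) := by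
        have h1 : T u * Ring.inverse (T u) = 1 := Ring.mul_inverse_cancel _ (hTunit u hu)
        calc T u (Ring.inverse (T u) (ContinuousLinearMap.adjoint (A u) (f u)))
            = (T u * Ring.inverse (T u)) (ContinuousLinearMap.adjoint (A u) (f u)) := rfl
          _ = _ := by rw [h1]; rfl
      rw [hmul, sub_self]
    have h3 := ContinuousLinearMap.adjoint_inner_left (A u) y (f u - A u (ξ u))
    rw [key] at h3
    rw [← h3, inner_zero_left]
  -- η equals the tangential projection
  have hproj : ∀ u ∈ U, A u (ξ u) = tangentProj f u (f u) := by
    intro u hu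
    symm
    change Submodule.starProjection (LinearMap.range (fderiv ℝ f u : EuclideanSpace ℝ (Fin n) →ₗ[ℝ] EuclideanSpace ℝ (Fin m))) (f u) = _
    apply Submodule.eq_starProjection_of_mem_of_inner_eq_zero
    · exact ⟨ξ u, rfl⟩
    · rintro w ⟨y, rfl⟩
      exact horth u hu y
  -- the squared norm function
  set g : EuclideanSpace ℝ (Fin n) → ℝ :=
    fun u => ⟪f u - A u (ξ u), f u - A u (ξ u)⟫ with hgdef
  -- g has zero derivative on U
  have hg0 : ∀ u ∈ U, HasFDerivAt g (0 : EuclideanSpace ℝ (Fin n) →L[ℝ] ℝ) u := by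
    intro u hu
    obtain ⟨hfA, hAA, hξA⟩ := hcd u hu
    have hfd : HasFDerivAt f (A u) u := (hfA.differentiableAt (by simp)).hasFDerivAt
    have hAd : HasFDerivAt A (fderiv ℝ A u) u := (hAA.differentiableAt (by simp)).hasFDerivAt
    have hξd : HasFDerivAt ξ (fderiv ℝ ξ u) u := (hξA.differentiableAt (by simp)).hasFDerivAt
    have hηd : HasFDerivAt (fun v => A v (ξ v))
        ((A u).comp (fderiv ℝ ξ u) + (fderiv ℝ A u).flip (ξ u)) u := hAd.clm_apply hξd
    have hxd : HasFDerivAt (fun v => f v - A v (ξ v))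
        (A u - ((A u).comp (fderiv ℝ ξ u) + (fderiv ℝ A u).flip (ξ u))) u := hfd.sub hηd
    have hgd := hxd.inner ℝ hxd
    refine hgd.congr_fderiv ?_
    symm
    ext X
    set x' := A u - ((A u).comp (fderiv ℝ ξ u) + (fderiv ℝ A u).flip (ξ u)) with hx'def
    have happ : ∀ Z, ⟪f u - A u (ξ u), x' Z⟫ = 0 := by
      intro Z
      have hx'Z : x' Z = A u (Z - fderiv ℝ ξ u Z) - fderiv ℝ A u Z (ξ u) := by
        simp [hx'def, map_sub]
        abel
      rw [hx'Z, inner_sub_right, horth u hu (Z - fderiv ℝ ξ u Z)]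
      have hsec : ⟪f u - A u (ξ u), fderiv ℝ A u Z (ξ u)⟫ = 0 := by
        have hDA : fderiv ℝ A u = fderiv ℝ (fderiv ℝ f) u := rfl
        rw [hDA]
        set D := fderiv ℝ (fderiv ℝ f) u Z (ξ u) with hDdef
        have hr := hrect u hu Z (ξ u)
        unfold sff at hr
        rw [inner_sub_right] at hr
        have hr' : ⟪f u, D⟫ = ⟪f u, tangentProj f u D⟫ := by
          rw [sub_eq_zero] at hr
          exact hr
        have hswap : ⟪tangentProj f u (f u), D⟫ = ⟪f u, tangentProj f u D⟫ :=
          Submodule.inner_starProjection_left_eq_right _ (f u) D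
        rw [inner_sub_left, hproj u hu, hswap, ← hr', sub_self]
      rw [hsec, sub_zero]
    simp only [ContinuousLinearMap.comp_apply, ContinuousLinearMap.prod_apply,
      fderivInnerCLM_apply, ContinuousLinearMap.zero_apply]
    rw [happ X, real_inner_comm, happ X, add_zero]
  -- g is locally constant on U
  have hloc : ∀ u ∈ U, ∃ s, IsOpen s ∧ u ∈ s ∧ s ⊆ U ∧ ∀ v ∈ s, g v = g u := by
    intro u hu
    obtain ⟨ε, hε, hball⟩ := Metric.isOpen_iff.mp hU u hu
    refine ⟨Metric.ball u ε, Metric.isOpen_ball, Metric.mem_ball_self hε, hball, ?_⟩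
    intro v hv
    have hdiff : DifferentiableOn ℝ g (Metric.ball u ε) := fun w hw =>
      ((hg0 w (hball hw)).differentiableAt).differentiableWithinAt
    have hfd' : ∀ w ∈ Metric.ball u ε, fderivWithin ℝ g (Metric.ball u ε) w = 0 := by
      intro w hw
      exact ((hg0 w (hball hw)).hasFDerivWithinAt).fderivWithin
        (Metric.isOpen_ball.uniqueDiffOn w hw)
    exact (convex_ball u ε).is_const_of_fderivWithin_eq_zero hdiff hfd' hv
      (Metric.mem_ball_self hε)
  have hconst : ∀ u ∈ U, g u = g u₀ := loc_const_of_connected hUconn g hloc hu₀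
  -- relate g and posN
  have hgN : ∀ u ∈ U, g u = ‖posN f u‖ ^ 2 := by
    intro u hu
    have : f u - A u (ξ u) = posN f u := by rw [hproj u hu]; rfl
    rw [hgdef]
    simp only [this]
    exact real_inner_self_eq_norm_sq _
  refine ⟨‖posN f u₀‖, norm_pos_iff.mpr (hN u₀ hu₀), ?_⟩
  intro u hu
  have h1 : ‖posN f u‖ ^ 2 = ‖posN f u₀‖ ^ 2 := by
    rw [← hgN u hu, ← hgN u₀ hu₀]
    exact hconst u hu
  nlinarith [norm_nonneg (posN f u), norm_nonneg (posN f u₀)]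
end

section
/- Let f : U → ℝᵐ be a proper rectifying smooth immersion of a connected open set U ⊆ ℝⁿ, let J ⊆ ℝ be an open interval and let γ : J → U be a smooth curve which is a unit-speed integral curve of the tangential position field, i.e. for every s ∈ J the derivative of f ∘ γ at s equals x^T(γ(s))/‖x^T(γ(s))‖. Then the function s ↦ ‖x^T(γ(s))‖ has derivative identically equal to 1 on J; consequently there exists a constant b ∈ ℝ with ‖x^T(γ(s))‖ = s + b for all s ∈ J. (Theorem 5.1(a): |x^T| = s + b for some constant b.) -/
open scoped RealInnerProductSpace

/-- Inner product with a vector in `K` sees only the projection onto `K`. -/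
lemma inner_eq_inner_proj {m : ℕ} (K : Submodule ℝ (EuclideanSpace ℝ (Fin m)))
    (v w : EuclideanSpace ℝ (Fin m)) (hw : w ∈ K) :
    ⟪v, w⟫ = ⟪(Submodule.orthogonalProjectionOnto K v : EuclideanSpace ℝ (Fin m)), w⟫ := by
  have h0 : ⟪v - (Submodule.orthogonalProjectionOnto K v : EuclideanSpace ℝ (Fin m)), w⟫ = 0 :=
    K.starProjection_inner_eq_zero v w hw
  rw [inner_sub_left] at h0
  linarith

/-- **Theorem 5.1(a).** Let `f : U → ℝᵐ` be a proper rectifying smooth immersion and let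
`γ : (a,b) → U` be a unit-speed integral curve of the tangential position field, i.e. the
derivative of `f ∘ γ` at `s` is `x^T(γ s)/‖x^T(γ s)‖`. Then `s ↦ ‖x^T(γ s)‖` has
derivative identically `1`, hence `‖x^T(γ s)‖ = s + b₀` for some constant `b₀`. -/
theorem stmt_8 {n m : ℕ} (hn : 0 < n) (hnm : n < m)
    (U : Set (EuclideanSpace ℝ (Fin n))) (hU : IsOpen U) (hUconn : IsConnected U)
    (f : EuclideanSpace ℝ (Fin n) → EuclideanSpace ℝ (Fin m))
    (hf : ContDiffOn ℝ (⊤ : ℕ∞) f U)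
    (himm : ∀ u ∈ U, Function.Injective (fderiv ℝ f u))
    (hrect : ∀ u ∈ U, ∀ X Y : EuclideanSpace ℝ (Fin n), ⟪f u, sff f u X Y⟫ = 0)
    (hT : ∀ u ∈ U, posT f u ≠ 0) (hN : ∀ u ∈ U, posN f u ≠ 0)
    (a b : ℝ) (γ : ℝ → EuclideanSpace ℝ (Fin n))
    (hγs : ContDiffOn ℝ (⊤ : ℕ∞) γ (Set.Ioo a b))
    (hγU : ∀ s ∈ Set.Ioo a b, γ s ∈ U)
    (hγint : ∀ s ∈ Set.Ioo a b,
      HasDerivAt (fun t => f (γ t)) (‖posT f (γ s)‖⁻¹ • posT f (γ s)) s) :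
    (∀ s ∈ Set.Ioo a b, HasDerivAt (fun t => ‖posT f (γ t)‖) 1 s) ∧
      ∃ b₀ : ℝ, ∀ s ∈ Set.Ioo a b, ‖posT f (γ s)‖ = s + b₀ := by
  classical
  set I : Set ℝ := Set.Ioo a b with hIdef
  have hIopen : IsOpen I := isOpen_Ioo
  -- basic facts
  have hρ : ∀ u ∈ U, ‖posT f u‖ ≠ 0 := fun u hu => norm_ne_zero_iff.mpr (hT u hu)
  have hposT_mem : ∀ u, posT f u ∈ LinearMap.range
      (fderiv ℝ f u : EuclideanSpace ℝ (Fin n) →ₗ[ℝ] EuclideanSpace ℝ (Fin m)) := fun u =>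
    (Submodule.orthogonalProjectionOnto (LinearMap.range
      (fderiv ℝ f u : EuclideanSpace ℝ (Fin n) →ₗ[ℝ] EuclideanSpace ℝ (Fin m))) (f u)).2
  -- the unit tangential field along the curve
  set V : ℝ → EuclideanSpace ℝ (Fin m) := fun t => ‖posT f (γ t)‖⁻¹ • posT f (γ t) with hVdef
  have hposT_smul : ∀ u ∈ U, posT f u = ‖posT f u‖ • (‖posT f u‖⁻¹ • posT f u) := by
    intro u hu
    rw [smul_smul, mul_inv_cancel₀ (hρ u hu), one_smul]
  have hVnorm : ∀ t ∈ I, ‖V t‖ = 1 := by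
    intro t ht
    have h := hρ (γ t) (hγU t ht)
    simp only [hVdef, norm_smul, norm_inv, norm_norm]
    field_simp
  -- differentiability bookkeeping
  have hγdiff : ∀ s ∈ I, HasDerivAt γ (deriv γ s) s := fun s hs =>
    (((hγs.differentiableOn (by simp)).differentiableAt (hIopen.mem_nhds hs))).hasDerivAt
  have hγ' : ContDiffOn ℝ (⊤ : ℕ∞) (deriv γ) I := hγs.deriv_of_isOpen hIopen (by simp)
  have hγ'diff : ∀ s ∈ I, HasDerivAt (deriv γ) (deriv (deriv γ) s) s := fun s hs =>
    (((hγ'.differentiableOn (by simp)).differentiableAt (hIopen.mem_nhds hs))).hasDerivAt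
  have hfd : ∀ u ∈ U, HasFDerivAt f (fderiv ℝ f u) u := fun u hu =>
    (((hf.differentiableOn (by simp)).differentiableAt (hU.mem_nhds hu))).hasFDerivAt
  have hf2 : ContDiffOn ℝ (⊤ : ℕ∞) (fderiv ℝ f) U := hf.fderiv_of_isOpen hU (by simp)
  have hf2d : ∀ u ∈ U, HasFDerivAt (fderiv ℝ f) (fderiv ℝ (fderiv ℝ f) u) u := fun u hu =>
    (((hf2.differentiableOn (by simp)).differentiableAt (hU.mem_nhds hu))).hasFDerivAt
  -- the chain rule : on I, V equals t ↦ (fderiv f (γ t)) (deriv γ t)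
  have hchain : ∀ s ∈ I, fderiv ℝ f (γ s) (deriv γ s) = V s := by
    intro s hs
    have h1 : HasDerivAt (fun t => f (γ t)) (fderiv ℝ f (γ s) (deriv γ s)) s :=
      (hfd (γ s) (hγU s hs)).comp_hasDerivAt s (hγdiff s hs)
    exact h1.unique (hγint s hs)
  -- second derivative of f ∘ γ
  set W : ℝ → EuclideanSpace ℝ (Fin m) := fun s =>
    fderiv ℝ (fderiv ℝ f) (γ s) (deriv γ s) (deriv γ s) +
      fderiv ℝ f (γ s) (deriv (deriv γ) s) with hWdef
  have hVd : ∀ s ∈ I, HasDerivAt V (W s) s := by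
    intro s hs
    have hc : HasDerivAt (fun t => fderiv ℝ f (γ t))
        (fderiv ℝ (fderiv ℝ f) (γ s) (deriv γ s)) s :=
      (hf2d (γ s) (hγU s hs)).comp_hasDerivAt s (hγdiff s hs)
    have h1 : HasDerivAt (fun t => fderiv ℝ f (γ t) (deriv γ t)) (W s) s :=
      hc.clm_apply (hγ'diff s hs)
    refine h1.congr_of_eventuallyEq ?_
    filter_upwards [hIopen.mem_nhds hs] with t ht
    exact (hchain t ht).symm
  -- ⟪V, V⟫ = 1 on I, hence ⟪V, W⟫ = 0
  have hVV : ∀ t ∈ I, ⟪V t, V t⟫ = 1 := by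
    intro t ht
    rw [real_inner_self_eq_norm_mul_norm, hVnorm t ht]; norm_num
  have hVW : ∀ s ∈ I, ⟪V s, W s⟫ = 0 := by
    intro s hs
    have hd : HasDerivAt (fun t => ⟪V t, V t⟫) (⟪V s, W s⟫ + ⟪W s, V s⟫) s :=
      (hVd s hs).inner ℝ (hVd s hs)
    have hconst : HasDerivAt (fun t => ⟪V t, V t⟫) 0 s := by
      refine (hasDerivAt_const s (1 : ℝ)).congr_of_eventuallyEq ?_
      filter_upwards [hIopen.mem_nhds hs] with t ht
      exact hVV t ht
    have h0 := hd.unique hconst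
    have hcomm := real_inner_comm (V s) (W s)
    linarith
  -- the rectifying condition kills ⟪f ∘ γ, W⟫
  have hgW : ∀ s ∈ I, ⟪f (γ s), W s⟫ = 0 := by
    intro s hs
    set u := γ s with hu
    have huU : u ∈ U := hγU s hs
    set K := LinearMap.range
      (fderiv ℝ f u : EuclideanSpace ℝ (Fin n) →ₗ[ℝ] EuclideanSpace ℝ (Fin m)) with hK
    set D2 := fderiv ℝ (fderiv ℝ f) u (deriv γ s) (deriv γ s) with hD2
    set D1 := fderiv ℝ f u (deriv (deriv γ) s) with hD1
    have hD1K : D1 ∈ K := ⟨deriv (deriv γ) s, rfl⟩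
    have hPD2K : tangentProj f u D2 ∈ K := (Submodule.orthogonalProjectionOnto K D2).2
    -- rectifying: ⟪f u, D2⟫ = ⟪f u, P D2⟫
    have h2 : ⟪f u, D2⟫ = ⟪f u, tangentProj f u D2⟫ := by
      have := hrect u huU (deriv γ s) (deriv γ s)
      rw [sff, inner_sub_right] at this
      linarith
    -- only the tangential part of f u matters against K
    have h3 : ⟪f u, tangentProj f u D2⟫ = ⟪posT f u, tangentProj f u D2⟫ :=
      inner_eq_inner_proj K (f u) _ hPD2K
    have h4 : ⟪f u, D1⟫ = ⟪posT f u, D1⟫ := inner_eq_inner_proj K (f u) _ hD1K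
    -- and against the tangential part of f u, the projection is invisible
    have h5 : ⟪posT f u, tangentProj f u D2⟫ = ⟪posT f u, D2⟫ := by
      have h := inner_eq_inner_proj K D2 (posT f u) (hposT_mem u)
      calc ⟪posT f u, tangentProj f u D2⟫
          = ⟪tangentProj f u D2, posT f u⟫ := real_inner_comm _ _
        _ = ⟪D2, posT f u⟫ := h.symm
        _ = ⟪posT f u, D2⟫ := real_inner_comm _ _
    have h6 : ⟪posT f u, W s⟫ = 0 := by
      have h7 : ⟪V s, W s⟫ = 0 := hVW s hs
      have : ⟪posT f u, W s⟫ = ‖posT f u‖ * ⟪V s, W s⟫ := by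
        conv_lhs => rw [hposT_smul u huU]
        rw [real_inner_smul_left]
      rw [this, h7, mul_zero]
    calc ⟪f u, W s⟫ = ⟪f u, D2⟫ + ⟪f u, D1⟫ := by rw [hWdef, inner_add_right]
      _ = ⟪posT f u, D2⟫ + ⟪posT f u, D1⟫ := by rw [h2, h3, h5, h4]
      _ = ⟪posT f u, W s⟫ := by rw [hWdef, inner_add_right]
      _ = 0 := h6
  -- ⟪f ∘ γ, V⟫ equals ‖posT ∘ γ‖ on I
  have hρeq : ∀ t ∈ I, ⟪f (γ t), V t⟫ = ‖posT f (γ t)‖ := by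
    intro t ht
    have huU := hγU t ht
    have h1 : ⟪f (γ t), posT f (γ t)⟫ = ‖posT f (γ t)‖ ^ 2 := by
      rw [inner_eq_inner_proj (LinearMap.range
          (fderiv ℝ f (γ t) : EuclideanSpace ℝ (Fin n) →ₗ[ℝ] EuclideanSpace ℝ (Fin m))) (f (γ t)) _
        (hposT_mem (γ t))]
      have hc : ((Submodule.orthogonalProjectionOnto (LinearMap.range
          (fderiv ℝ f (γ t) : EuclideanSpace ℝ (Fin n) →ₗ[ℝ] EuclideanSpace ℝ (Fin m))) (f (γ t)) :
          EuclideanSpace ℝ (Fin m))) = posT f (γ t) := rfl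
      rw [hc, real_inner_self_eq_norm_sq]
    rw [hVdef]
    simp only [real_inner_smul_right, h1]
    have := hρ (γ t) huU
    field_simp
  -- first conclusion
  have main1 : ∀ s ∈ I, HasDerivAt (fun t => ‖posT f (γ t)‖) 1 s := by
    intro s hs
    have hd : HasDerivAt (fun t => ⟪f (γ t), V t⟫) (⟪f (γ s), W s⟫ + ⟪V s, V s⟫) s :=
      (hγint s hs).inner ℝ (hVd s hs)
    rw [hgW s hs, hVV s hs, zero_add] at hd
    have heps : (fun t => ‖posT f (γ t)‖) =ᶠ[nhds s] fun t => ⟪f (γ t), V t⟫ := by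
      filter_upwards [hIopen.mem_nhds hs] with t ht
      exact (hρeq t ht).symm
    exact hd.congr_of_eventuallyEq heps
  refine ⟨main1, ?_⟩
  -- second conclusion: mean value theorem
  rcases Set.eq_empty_or_nonempty I with hIe | ⟨s₀, hs₀⟩
  · exact ⟨0, fun s hs => absurd hs (by rw [hIe] at *; exact Set.notMem_empty s)⟩
  · set φ : ℝ → ℝ := fun t => ‖posT f (γ t)‖ - t with hφ
    have hφd : ∀ s ∈ I, HasDerivAt φ 0 s := by
      intro s hs
      simpa using (main1 s hs).fun_sub (hasDerivAt_id' s)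
    have hconst : ∀ s ∈ I, φ s = φ s₀ := by
      intro s hs
      refine (convex_Ioo a b).is_const_of_fderivWithin_eq_zero
        (f := φ) (fun t ht => ((hφd t ht).differentiableAt).differentiableWithinAt) ?_ hs hs₀
      intro t ht
      have h1 : fderivWithin ℝ φ I t = fderiv ℝ φ t :=
        fderivWithin_of_isOpen hIopen ht
      have h2 : deriv φ t = 0 := (hφd t ht).deriv
      rw [h1, ← toSpanSingleton_deriv, h2]
      ext x
      simp
    refine ⟨φ s₀, fun s hs => ?_⟩
    have := hconst s hs
    simp only [hφ] at this ⊢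
    linarith
end

section
/- Let f : U → ℝᵐ be a proper rectifying smooth immersion of a connected open set U ⊆ ℝⁿ, let J ⊆ ℝ be an open interval and let γ : J → U be a smooth curve which is a unit-speed integral curve of the tangential position field, i.e. for every s ∈ J the derivative of f ∘ γ at s equals x^T(γ(s))/‖x^T(γ(s))‖. Then there exist constants c₁, c₂ ∈ ℝ such that ‖f(γ(s))‖² = s² + c₁ s + c₂ for all s ∈ J. (Theorem 5.1(b): |x|² = s² + c₁ s + c₂ for some constants c₁ and c₂.) -/
open scoped RealInnerProductSpace

lemma const_of_hasDerivAt_zero_Ioo {a b : ℝ} {φ : ℝ → ℝ}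
    (h : ∀ s ∈ Set.Ioo a b, HasDerivAt φ 0 s) {s t : ℝ}
    (hs : s ∈ Set.Ioo a b) (ht : t ∈ Set.Ioo a b) : φ s = φ t := by
  apply (convex_Ioo a b).is_const_of_fderivWithin_eq_zero
    (fun z hz => (h z hz).differentiableAt.differentiableWithinAt)
    (fun z hz => ?_) hs ht
  rw [fderivWithin_of_isOpen isOpen_Ioo hz, (h z hz).hasFDerivAt.fderiv]
  ext; simp

/-- **Theorem 5.1(b).** Let `f : U → ℝᵐ` be a proper rectifying smooth immersion and let
`γ : (a,b) → U` be a unit-speed integral curve of the tangential position field. Then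
`‖f (γ s)‖² = s² + c₁ s + c₂` for some constants `c₁, c₂`. -/
theorem stmt_9 {n m : ℕ} (hn : 0 < n) (hnm : n < m)
    (U : Set (EuclideanSpace ℝ (Fin n))) (hU : IsOpen U) (hUconn : IsConnected U)
    (f : EuclideanSpace ℝ (Fin n) → EuclideanSpace ℝ (Fin m))
    (hf : ContDiffOn ℝ (⊤ : ℕ∞) f U)
    (himm : ∀ u ∈ U, Function.Injective (fderiv ℝ f u))
    (hrect : ∀ u ∈ U, ∀ X Y : EuclideanSpace ℝ (Fin n), ⟪f u, sff f u X Y⟫ = 0)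
    (hT : ∀ u ∈ U, posT f u ≠ 0) (hN : ∀ u ∈ U, posN f u ≠ 0)
    (a b : ℝ) (γ : ℝ → EuclideanSpace ℝ (Fin n))
    (hγs : ContDiffOn ℝ (⊤ : ℕ∞) γ (Set.Ioo a b))
    (hγU : ∀ s ∈ Set.Ioo a b, γ s ∈ U)
    (hγint : ∀ s ∈ Set.Ioo a b,
      HasDerivAt (fun t => f (γ t)) (‖posT f (γ s)‖⁻¹ • posT f (γ s)) s) :
    ∃ c₁ c₂ : ℝ, ∀ s ∈ Set.Ioo a b, ‖f (γ s)‖ ^ 2 = s ^ 2 + c₁ * s + c₂ := by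
  rcases Set.eq_empty_or_nonempty (Set.Ioo a b) with hIe | ⟨s₀, hs₀⟩
  · exact ⟨0, 0, fun s hs => absurd (hIe ▸ hs) (Set.notMem_empty s)⟩
  have hIopen : IsOpen (Set.Ioo a b) := isOpen_Ioo
  set x : ℝ → EuclideanSpace ℝ (Fin m) := fun t => f (γ t) with hxdef
  set v : ℝ → EuclideanSpace ℝ (Fin m) := fun t => ‖posT f (γ t)‖⁻¹ • posT f (γ t) with hvdef
  have hxv : ∀ s ∈ Set.Ioo a b, HasDerivAt x (v s) s := hγint
  have hxC : ContDiffOn ℝ (⊤ : ℕ∞) x (Set.Ioo a b) := hf.comp hγs (fun s hs => hγU s hs)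
  have hderiveq : ∀ s ∈ Set.Ioo a b, deriv x s = v s := fun s hs => (hxv s hs).deriv
  have hdC : ContDiffOn ℝ (⊤ : ℕ∞) (deriv x) (Set.Ioo a b) := hxC.deriv_of_isOpen hIopen (by simp)
  set w : ℝ → EuclideanSpace ℝ (Fin m) := fun s => deriv (deriv x) s with hwdef
  have hdw : ∀ s ∈ Set.Ioo a b, HasDerivAt (deriv x) (w s) s := fun s hs =>
    ((hdC.differentiableOn (by simp)).differentiableAt (hIopen.mem_nhds hs)).hasDerivAt
  have hvw : ∀ s ∈ Set.Ioo a b, HasDerivAt v (w s) s := fun s hs =>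
    (hdw s hs).congr_of_eventuallyEq
      (Filter.eventuallyEq_of_mem (hIopen.mem_nhds hs) fun t ht => (hderiveq t ht).symm)
  have hnormne : ∀ s ∈ Set.Ioo a b, ‖posT f (γ s)‖ ≠ 0 := fun s hs =>
    norm_ne_zero_iff.mpr (hT _ (hγU s hs))
  have hv1 : ∀ s ∈ Set.Ioo a b, ⟪v s, v s⟫ = 1 := by
    intro s hs
    have hnorm : ‖v s‖ = 1 := by
      rw [hvdef]
      simp only
      rw [norm_smul, norm_inv, norm_norm, inv_mul_cancel₀ (hnormne s hs)]
    rw [real_inner_self_eq_norm_sq, hnorm]; norm_num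
  have hvw0 : ∀ s ∈ Set.Ioo a b, ⟪v s, w s⟫ = 0 := by
    intro s hs
    have h1 : HasDerivAt (fun t => ⟪v t, v t⟫) (⟪v s, w s⟫ + ⟪w s, v s⟫) s :=
      HasDerivAt.inner ℝ (hvw s hs) (hvw s hs)
    have h2 : HasDerivAt (fun t => ⟪v t, v t⟫) 0 s :=
      (hasDerivAt_const s (1:ℝ)).congr_of_eventuallyEq
        (Filter.eventuallyEq_of_mem (hIopen.mem_nhds hs) fun t ht => hv1 t ht)
    have h3 := h1.unique h2
    rw [real_inner_comm (w s)] at h3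
    rw [real_inner_comm]
    linarith
  have hfd : ∀ u ∈ U, HasFDerivAt f (fderiv ℝ f u) u := fun u hu =>
    ((hf.differentiableOn (by simp)).differentiableAt (hU.mem_nhds hu)).hasFDerivAt
  have hγd : ∀ s ∈ Set.Ioo a b, HasDerivAt γ (deriv γ s) s := fun s hs =>
    ((hγs.differentiableOn (by simp)).differentiableAt (hIopen.mem_nhds hs)).hasDerivAt
  have hveq : ∀ s ∈ Set.Ioo a b, v s = fderiv ℝ f (γ s) (deriv γ s) := fun s hs =>
    (hxv s hs).unique ((hfd (γ s) (hγU s hs)).comp_hasDerivAt s (hγd s hs))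
  have hFC : ContDiffOn ℝ (⊤ : ℕ∞) (fderiv ℝ f) U := hf.fderiv_of_isOpen hU (by simp)
  have hFd : ∀ u ∈ U, HasFDerivAt (fderiv ℝ f) (fderiv ℝ (fderiv ℝ f) u) u := fun u hu =>
    ((hFC.differentiableOn (by simp)).differentiableAt (hU.mem_nhds hu)).hasFDerivAt
  have hγdC : ContDiffOn ℝ (⊤ : ℕ∞) (deriv γ) (Set.Ioo a b) := hγs.deriv_of_isOpen hIopen (by simp)
  have hγdd : ∀ s ∈ Set.Ioo a b, HasDerivAt (deriv γ) (deriv (deriv γ) s) s := fun s hs =>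
    ((hγdC.differentiableOn (by simp)).differentiableAt (hIopen.mem_nhds hs)).hasDerivAt
  have hweq : ∀ s ∈ Set.Ioo a b, w s =
      fderiv ℝ (fderiv ℝ f) (γ s) (deriv γ s) (deriv γ s)
        + fderiv ℝ f (γ s) (deriv (deriv γ) s) := by
    intro s hs
    have hA : HasDerivAt (fun t => fderiv ℝ f (γ t)) (fderiv ℝ (fderiv ℝ f) (γ s) (deriv γ s)) s :=
      (hFd (γ s) (hγU s hs)).comp_hasDerivAt s (hγd s hs)
    have hAc := hA.clm_apply (hγdd s hs)
    have hAc' : HasDerivAt (deriv x)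
        (fderiv ℝ (fderiv ℝ f) (γ s) (deriv γ s) (deriv γ s)
          + fderiv ℝ f (γ s) (deriv (deriv γ) s)) s :=
      hAc.congr_of_eventuallyEq
        (Filter.eventuallyEq_of_mem (hIopen.mem_nhds hs) fun t ht =>
          (hderiveq t ht).trans (hveq t ht))
    exact (hdw s hs).unique hAc'
  have hxw0 : ∀ s ∈ Set.Ioo a b, ⟪x s, w s⟫ = 0 := by
    intro s hs
    have hu : γ s ∈ U := hγU s hs
    have hmem : fderiv ℝ f (γ s) (deriv (deriv γ) s) ∈ LinearMap.range
        (fderiv ℝ f (γ s) : EuclideanSpace ℝ (Fin n) →ₗ[ℝ] EuclideanSpace ℝ (Fin m)) :=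
      LinearMap.mem_range_self _ _
    have hPw : tangentProj f (γ s) (w s) =
        tangentProj f (γ s) (fderiv ℝ (fderiv ℝ f) (γ s) (deriv γ s) (deriv γ s))
          + fderiv ℝ f (γ s) (deriv (deriv γ) s) := by
      unfold tangentProj
      rw [hweq s hs, map_add, Submodule.coe_add]
      simp only [Submodule.coe_orthogonalProjectionOnto_apply]
      rw [Submodule.starProjection_eq_self_iff.mpr hmem]
    have h1 : w s - tangentProj f (γ s) (w s) = sff f (γ s) (deriv γ s) (deriv γ s) := by
      rw [hPw, hweq s hs]
      unfold sff
      abel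
    have hsplit : ⟪x s, w s⟫ =
        ⟪f (γ s), w s - tangentProj f (γ s) (w s)⟫ + ⟪f (γ s), tangentProj f (γ s) (w s)⟫ := by
      rw [inner_sub_right]; show ⟪f (γ s), w s⟫ = _; ring
    have h2 : ⟪f (γ s), tangentProj f (γ s) (w s)⟫ = ⟪posT f (γ s), w s⟫ := by
      unfold tangentProj posT
      simp only [Submodule.coe_orthogonalProjectionOnto_apply]
      exact (Submodule.inner_starProjection_left_eq_right _ _ _).symm
    have h3 : posT f (γ s) = ‖posT f (γ s)‖ • v s := by
      rw [hvdef]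
      simp only
      rw [smul_smul, mul_inv_cancel₀ (hnormne s hs), one_smul]
    rw [hsplit, h1, hrect (γ s) hu, h2, h3, real_inner_smul_left, hvw0 s hs]
    ring
  have hρ : ∀ s ∈ Set.Ioo a b, HasDerivAt (fun t => ⟪x t, v t⟫) 1 s := by
    intro s hs
    have h := HasDerivAt.inner ℝ (hxv s hs) (hvw s hs)
    rwa [hxw0 s hs, hv1 s hs, zero_add] at h
  have hφ1 : ∀ s ∈ Set.Ioo a b, HasDerivAt (fun t => ⟪x t, v t⟫ - t) 0 s := by
    intro s hs
    have h := (hρ s hs).sub (hasDerivAt_id s)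
    rw [sub_self] at h
    exact h
  set c : ℝ := ⟪x s₀, v s₀⟫ - s₀ with hcdef
  have hρeq : ∀ s ∈ Set.Ioo a b, ⟪x s, v s⟫ = s + c := by
    intro s hs
    have := const_of_hasDerivAt_zero_Ioo hφ1 hs hs₀
    rw [hcdef]
    linarith
  have hg : ∀ s ∈ Set.Ioo a b, HasDerivAt (fun t => ⟪x t, x t⟫) (2 * s + 2 * c) s := by
    intro s hs
    have h := HasDerivAt.inner ℝ (hxv s hs) (hxv s hs)
    have h' : ⟪v s, x s⟫ = s + c := (real_inner_comm _ _).trans (hρeq s hs)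
    rw [h', hρeq s hs] at h
    rw [show (2:ℝ) * s + 2 * c = s + c + (s + c) by ring]
    exact h
  have hφ2 : ∀ s ∈ Set.Ioo a b,
      HasDerivAt (fun t => ⟪x t, x t⟫ - (t ^ 2 + 2 * c * t)) 0 s := by
    intro s hs
    have h2 : HasDerivAt (fun t : ℝ => t ^ 2 + 2 * c * t) (2 * s + 2 * c) s := by
      have := (hasDerivAt_pow 2 s).add ((hasDerivAt_id s).const_mul (2 * c))
      rw [show (2:ℝ) * s + 2 * c = ((2:ℕ):ℝ) * s ^ (2 - 1) + 2 * c * 1 by norm_num]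
      exact this
    have h := (hg s hs).sub h2
    rw [sub_self] at h
    exact h
  refine ⟨2 * c, ⟪x s₀, x s₀⟫ - (s₀ ^ 2 + 2 * c * s₀), fun s hs => ?_⟩
  have hconst := const_of_hasDerivAt_zero_Ioo hφ2 hs hs₀
  have hval : ‖f (γ s)‖ ^ 2 = ⟪x s, x s⟫ := by
    rw [real_inner_self_eq_norm_sq]
  rw [hval]
  linarith
end

section
/- Let f : U → ℝᵐ be a proper rectifying smooth immersion of a connected open set U ⊆ ℝⁿ. Fix u ∈ U and let X₀ ∈ ℝⁿ be the unique vector with fderiv ℝ f u X₀ = x^T(u). Then for all Y, Z, W ∈ ℝⁿ one has ⟪h_u(X₀, W), h_u(Y, Z)⟫ = ⟪h_u(X₀, Z), h_u(Y, W)⟫. (Theorem 5.1(e): by the Gauss equation, the Riemann curvature tensor of M satisfies R(x^T, Y; Z, W) = 0 for all tangent vectors Y, Z, W.) -/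
open scoped RealInnerProductSpace

namespace Stmt10Aux

open ContinuousLinearMap (adjoint)

variable {n m : ℕ}
local notation "EE" => EuclideanSpace ℝ (Fin n)
local notation "FF" => EuclideanSpace ℝ (Fin m)

/-- The coefficient vector of the orthogonal projection of `w` onto `range T`. -/
noncomputable def cvec (T : EE →L[ℝ] FF) (w : FF) : EE :=
  Ring.inverse ((adjoint T).comp T) ((adjoint T) w)

theorem isUnit_adj_comp (T : EE →L[ℝ] FF) (hT : Function.Injective T) :
    IsUnit ((adjoint T).comp T) := by
  have hinj : Function.Injective ((adjoint T).comp T) := by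
    have h : ∀ z, (adjoint T).comp T z = 0 → z = 0 := by
      intro z hz
      have h1 : ⟪T z, T z⟫ = 0 := by
        rw [← ContinuousLinearMap.adjoint_inner_left]
        have : (adjoint T) (T z) = 0 := by simpa using hz
        simp [this]
      have := inner_self_eq_zero.mp h1
      exact hT (by simpa using this)
    intro x y hxy
    have := h (x - y) (by simp [map_sub, hxy])
    exact sub_eq_zero.mp this
  have hbij : Function.Bijective ((adjoint T).comp T) :=
    ⟨hinj, LinearMap.injective_iff_surjective.mp hinj⟩
  let e : EE ≃ₗ[ℝ] EE := LinearEquiv.ofBijective ((adjoint T).comp T).toLinearMap hbij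
  let e' : EE ≃L[ℝ] EE := e.toContinuousLinearEquiv
  refine ⟨⟨(adjoint T).comp T, e'.symm.toContinuousLinearMap, ?_, ?_⟩, rfl⟩
  · refine ContinuousLinearMap.ext fun x => ?_
    show ((adjoint T).comp T) (e'.symm x) = x
    have : ∀ y, e' y = ((adjoint T).comp T) y := fun y => rfl
    rw [← this]; exact e'.apply_symm_apply x
  · refine ContinuousLinearMap.ext fun x => ?_
    show e'.symm (((adjoint T).comp T) x) = x
    have : ∀ y, e' y = ((adjoint T).comp T) y := fun y => rfl
    rw [← this]; exact e'.symm_apply_apply x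

theorem cvec_solves (T : EE →L[ℝ] FF) (hT : Function.Injective T) (w : FF) :
    ((adjoint T).comp T) (cvec T w) = (adjoint T) w := by
  show (((adjoint T).comp T) * Ring.inverse ((adjoint T).comp T)) ((adjoint T) w) = _
  rw [Ring.mul_inverse_cancel _ (isUnit_adj_comp T hT)]; rfl

theorem cvec_orth (T : EE →L[ℝ] FF) (hT : Function.Injective T) (w : FF) (x : EE) :
    ⟪w - T (cvec T w), T x⟫ = 0 := by
  have : ⟪w - T (cvec T w), T x⟫ = ⟪(adjoint T) w - ((adjoint T).comp T) (cvec T w), x⟫ := by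
    rw [inner_sub_left, inner_sub_left, ← ContinuousLinearMap.adjoint_inner_left,
      ← ContinuousLinearMap.adjoint_inner_left]
    rfl
  rw [this, cvec_solves T hT, sub_self, inner_zero_left]

theorem proj_eq (T : EE →L[ℝ] FF) (hT : Function.Injective T) (w : FF) :
    (Submodule.orthogonalProjectionOnto (LinearMap.range (T : EE →ₗ[ℝ] FF)) w : FF) = T (cvec T w) := by
  apply Submodule.eq_starProjection_of_mem_of_inner_eq_zero
  · exact LinearMap.mem_range_self _ _
  · rintro _ ⟨x, rfl⟩
    exact cvec_orth T hT w x

noncomputable def adjLM : (EE →L[ℝ] FF) →ₗ[ℝ] (FF →L[ℝ] EE) where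
  toFun := adjoint
  map_add' a b := map_add _ a b
  map_smul' c a := by
    have := (ContinuousLinearMap.adjoint (𝕜 := ℝ) (E := EuclideanSpace ℝ (Fin n))
      (F := EuclideanSpace ℝ (Fin m))).map_smulₛₗ c a
    simpa using this

theorem contDiff_adjoint {N : WithTop ℕ∞} :
    ContDiff ℝ N (fun T : EE →L[ℝ] FF => adjoint T) := by
  have := (LinearMap.toContinuousLinearMap (adjLM (n := n) (m := m))).contDiff (n := N)
  convert this using 1
  funext T; rfl

end Stmt10Aux

open Stmt10Aux
open ContinuousLinearMap (adjoint)

set_option maxHeartbeats 2000000 in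
/-- **Theorem 5.1(e).** -/
theorem stmt_10 {n m : ℕ} (hn : 0 < n) (hnm : n < m)
    (U : Set (EuclideanSpace ℝ (Fin n))) (hU : IsOpen U) (hUconn : IsConnected U)
    (f : EuclideanSpace ℝ (Fin n) → EuclideanSpace ℝ (Fin m))
    (hf : ContDiffOn ℝ (⊤ : ℕ∞) f U)
    (himm : ∀ u ∈ U, Function.Injective (fderiv ℝ f u))
    (hrect : ∀ u ∈ U, ∀ X Y : EuclideanSpace ℝ (Fin n), ⟪f u, sff f u X Y⟫ = 0)
    (hT : ∀ u ∈ U, posT f u ≠ 0) (hN : ∀ u ∈ U, posN f u ≠ 0)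
    (u : EuclideanSpace ℝ (Fin n)) (hu : u ∈ U)
    (X₀ : EuclideanSpace ℝ (Fin n)) (hX₀ : fderiv ℝ f u X₀ = posT f u) :
    ∀ Y Z W : EuclideanSpace ℝ (Fin n),
      ⟪sff f u X₀ W, sff f u Y Z⟫ = ⟪sff f u X₀ Z, sff f u Y W⟫ := by
  intro Y Z W
  classical
  -- abbreviations (no `set` to keep things syntactically predictable)
  let g := fderiv ℝ f
  let g2 := fderiv ℝ g
  let g3 := fderiv ℝ g2
  have hUnhds : U ∈ nhds u := hU.mem_nhds hu
  have hfa : ∀ v ∈ U, ContDiffAt ℝ (⊤ : ℕ∞) f v := fun v hv => hf.contDiffAt (hU.mem_nhds hv)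
  have hgc : ContDiffAt ℝ 2 g u := (hfa u hu).fderiv_right (by exact WithTop.coe_le_coe.mpr le_top)
  have hg2c : ContDiffAt ℝ 1 g2 u := hgc.fderiv_right (by norm_num)
  have hgd : DifferentiableAt ℝ g u := hgc.differentiableAt (by norm_num)
  have hg2d : DifferentiableAt ℝ g2 u := hg2c.differentiableAt one_ne_zero
  have hfd : DifferentiableAt ℝ f u := (hfa u hu).differentiableAt (by simp)
  -- the coefficient field and the normal position field
  let c : EuclideanSpace ℝ (Fin n) → EuclideanSpace ℝ (Fin n) := fun v => cvec (g v) (f v)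
  let Nf : EuclideanSpace ℝ (Fin n) → EuclideanSpace ℝ (Fin m) := fun v => f v - g v (c v)
  have hNposN : ∀ v ∈ U, Nf v = posN f v := by
    intro v hv
    show f v - g v (c v) = f v - tangentProj f v (f v)
    rw [tangentProj, proj_eq (g v) (himm v hv)]
  -- Nf is orthogonal to the tangent space, on U
  have horthog : ∀ v ∈ U, ∀ x, ⟪Nf v, g v x⟫ = 0 := fun v hv x =>
    cvec_orth (g v) (himm v hv) (f v) x
  -- rectifying: Nf is orthogonal to second derivatives, on U
  have hrect' : ∀ v ∈ U, ∀ a b, ⟪Nf v, g2 v a b⟫ = 0 := by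
    intro v hv a b
    rw [hNposN v hv]
    have h1 : ⟪posN f v, g2 v a b⟫
        = ⟪f v, g2 v a b⟫ - ⟪(Submodule.orthogonalProjectionOnto (LinearMap.range (g v : EuclideanSpace ℝ (Fin n) →ₗ[ℝ] EuclideanSpace ℝ (Fin m))) (f v) :
            EuclideanSpace ℝ (Fin m)), g2 v a b⟫ := by
      rw [posN, tangentProj, inner_sub_left]
    rw [h1, Submodule.coe_orthogonalProjectionOnto_apply, Submodule.inner_starProjection_left_eq_right]
    have := hrect v hv a b
    rw [sff, tangentProj] at this
    rw [← inner_sub_right]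
    exact this
  -- sff is orthogonal to the tangent space
  have hsffnormal : ∀ v ∈ U, ∀ (x) (a b : EuclideanSpace ℝ (Fin n)),
      ⟪g v x, sff f v a b⟫ = 0 := by
    intro v hv x a b
    rw [sff, tangentProj, inner_sub_right, Submodule.coe_orthogonalProjectionOnto_apply, ← Submodule.inner_starProjection_left_eq_right]
    have hmem : g v x ∈ LinearMap.range (fderiv ℝ f v : EuclideanSpace ℝ (Fin n) →ₗ[ℝ] EuclideanSpace ℝ (Fin m)) := LinearMap.mem_range_self _ _
    rw [Submodule.starProjection_eq_self_iff.mpr hmem, sub_self]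
  -- c u = X₀
  have hc0 : c u = X₀ := by
    apply himm u hu
    show g u (c u) = _
    have := (proj_eq (g u) (himm u hu) (f u)).symm
    rw [this, hX₀, posT, tangentProj]
  -- differentiability of c at u
  have hadj : ContDiffAt ℝ 1 (fun v => adjoint (g v)) u :=
    (contDiff_adjoint.contDiffAt).comp u (hgc.of_le one_le_two)
  have hB : ContDiffAt ℝ 1 (fun v => (adjoint (g v)).comp (g v)) u :=
    hadj.clm_comp (hgc.of_le one_le_two)
  have hBu : IsUnit ((adjoint (g u)).comp (g u)) := isUnit_adj_comp _ (himm u hu)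
  have hinvAt : ContDiffAt ℝ 1 (Ring.inverse :
      (EuclideanSpace ℝ (Fin n) →L[ℝ] EuclideanSpace ℝ (Fin n)) → _)
      ((adjoint (g u)).comp (g u)) := by
    have := contDiffAt_ringInverse ℝ (n := 1) hBu.unit
    rwa [hBu.unit_spec] at this
  have hinv : ContDiffAt ℝ 1 (fun v => Ring.inverse ((adjoint (g v)).comp (g v))) u :=
    by have := hinvAt.comp u hB; exact this
  have ha : ContDiffAt ℝ 1 (fun v => adjoint (g v) (f v)) u :=
    hadj.clm_apply ((hfa u hu).of_le (by simp))
  have hcd : DifferentiableAt ℝ c u := ((hinv.clm_apply ha).differentiableAt one_ne_zero)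
  -- derivative of Nf
  let dc := fderiv ℝ c u
  have hgfd : HasFDerivAt g (g2 u) u := hgd.hasFDerivAt
  have hLc : HasFDerivAt (fun v => g v (c v)) ((g u).comp dc + (g2 u).flip (c u)) u :=
    hgfd.clm_apply hcd.hasFDerivAt
  have hNd : HasFDerivAt Nf (g u - ((g u).comp dc + (g2 u).flip (c u))) u :=
    hfd.hasFDerivAt.sub hLc
  let dN := fderiv ℝ Nf u
  have hdNapp : ∀ x, dN x = g u x - g u (dc x) - g2 u x (c u) := by
    intro x
    show fderiv ℝ Nf u x = _
    rw [hNd.fderiv]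
    simp only [ContinuousLinearMap.coe_sub', Pi.sub_apply, ContinuousLinearMap.add_apply,
      ContinuousLinearMap.coe_comp', Function.comp_apply, ContinuousLinearMap.flip_apply]
    abel
  have hdNrange : ∀ x, dN x + g2 u x (c u) ∈ LinearMap.range (g u : EuclideanSpace ℝ (Fin n) →ₗ[ℝ] EuclideanSpace ℝ (Fin m)) := by
    intro x
    refine ⟨x - dc x, ?_⟩
    rw [map_sub, hdNapp]
    abel
  -- derivative of v ↦ g v x for fixed x
  have hgx : ∀ x : EuclideanSpace ℝ (Fin n),
      HasFDerivAt (fun v => g v x) ((g2 u).flip x) u := by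
    intro x
    have := hgfd.clm_apply (hasFDerivAt_const x u)
    simpa using this
  -- derivative of v ↦ g2 v a b for fixed a b
  have hg2fd : HasFDerivAt g2 (g3 u) u := hg2d.hasFDerivAt
  have hg2ab : ∀ a b : EuclideanSpace ℝ (Fin n),
      HasFDerivAt (fun v => g2 v a b)
        ((ContinuousLinearMap.apply ℝ (EuclideanSpace ℝ (Fin m)) b).comp
          ((g3 u).flip a)) u := by
    intro a b
    have h1 : HasFDerivAt (fun v => g2 v a) ((g3 u).flip a) u := by
      have := hg2fd.clm_apply (hasFDerivAt_const a u)
      simpa using this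
    have h2 := h1.clm_apply (hasFDerivAt_const b u)
    have : (g2 u a).comp (0 : EuclideanSpace ℝ (Fin n) →L[ℝ] EuclideanSpace ℝ (Fin n))
        + ((g3 u).flip a).flip b
        = (ContinuousLinearMap.apply ℝ (EuclideanSpace ℝ (Fin m)) b).comp ((g3 u).flip a) := by
      ext x; simp
    rwa [this] at h2
  -- dN is normal: differentiate ⟪Nf v, g v x⟫ = 0
  have hdNnormal : ∀ x W', ⟪dN W', g u x⟫ = 0 := by
    intro x W'
    have hev : (fun v => ⟪Nf v, g v x⟫) =ᶠ[nhds u] (fun _ => (0 : ℝ)) :=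
      Filter.eventuallyEq_of_mem hUnhds (fun v hv => horthog v hv x)
    have hder0 : fderiv ℝ (fun v => ⟪Nf v, g v x⟫) u = 0 := by
      rw [hev.fderiv_eq]
      exact fderiv_const_apply 0
    have hthis := fderiv_inner_apply ℝ hNd.differentiableAt (hgx x).differentiableAt W'
    rw [hder0, (hgx x).fderiv] at hthis
    simp only [ContinuousLinearMap.zero_apply, ContinuousLinearMap.flip_apply] at hthis
    have h0 : ⟪Nf u, g2 u W' x⟫ = 0 := hrect' u hu W' x
    rw [h0] at hthis
    have : (0 : ℝ) = 0 + ⟪dN W', g u x⟫ := hthis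
    linarith [this]
  have hdNnormal' : ∀ (W' : EuclideanSpace ℝ (Fin n)),
      ∀ t ∈ LinearMap.range (g u : EuclideanSpace ℝ (Fin n) →ₗ[ℝ] EuclideanSpace ℝ (Fin m)), ⟪dN W', t⟫ = 0 := by
    rintro W' _ ⟨x, rfl⟩
    exact hdNnormal x W'
  -- symmetry of the second derivative at points of U
  have sym2 : ∀ v ∈ U, ∀ a b : EuclideanSpace ℝ (Fin n), g2 v a b = g2 v b a := by
    intro v hv a b
    exact ((hfa v hv).isSymmSndFDerivAt (by simp; exact WithTop.coe_le_coe.mpr (le_top : (2:ℕ∞) ≤ ⊤))) a b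
  -- the main computation
  have hmain : ∀ a b W' : EuclideanSpace ℝ (Fin n),
      ⟪Nf u, g3 u W' a b⟫ = ⟪sff f u X₀ W', sff f u a b⟫ := by
    intro a b W'
    have hev : (fun v => ⟪Nf v, g2 v a b⟫) =ᶠ[nhds u] (fun _ => (0 : ℝ)) :=
      Filter.eventuallyEq_of_mem hUnhds (fun v hv => hrect' v hv a b)
    have hder0 : fderiv ℝ (fun v => ⟪Nf v, g2 v a b⟫) u = 0 := by
      rw [hev.fderiv_eq]
      exact fderiv_const_apply 0
    have hthis := fderiv_inner_apply ℝ hNd.differentiableAt (hg2ab a b).differentiableAt W'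
    rw [hder0, (hg2ab a b).fderiv] at hthis
    simp only [ContinuousLinearMap.zero_apply, ContinuousLinearMap.coe_comp',
      Function.comp_apply, ContinuousLinearMap.flip_apply,
      ContinuousLinearMap.apply_apply] at hthis
    -- hthis : 0 = ⟪Nf u, g3 u W' a b⟫ + ⟪dN W', g2 u a b⟫
    have hsplit : g2 u a b = sff f u a b
        + (Submodule.orthogonalProjectionOnto (LinearMap.range (fderiv ℝ f u : EuclideanSpace ℝ (Fin n) →ₗ[ℝ] EuclideanSpace ℝ (Fin m))) (g2 u a b) :
            EuclideanSpace ℝ (Fin m)) := by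
      rw [sff, tangentProj]
      abel
    have hPmem : (Submodule.orthogonalProjectionOnto (LinearMap.range (fderiv ℝ f u : EuclideanSpace ℝ (Fin n) →ₗ[ℝ] EuclideanSpace ℝ (Fin m))) (g2 u a b) :
        EuclideanSpace ℝ (Fin m)) ∈ LinearMap.range (g u : EuclideanSpace ℝ (Fin n) →ₗ[ℝ] EuclideanSpace ℝ (Fin m)) :=
      (Submodule.orthogonalProjectionOnto (LinearMap.range (fderiv ℝ f u : EuclideanSpace ℝ (Fin n) →ₗ[ℝ] EuclideanSpace ℝ (Fin m))) (g2 u a b)).2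
    have e1 : ⟪dN W', g2 u a b⟫ = ⟪dN W', sff f u a b⟫ := by
      rw [hsplit, inner_add_right, hdNnormal' W' _ hPmem, add_zero]
    have e2 : ⟪dN W', sff f u a b⟫ = -⟪g2 u W' (c u), sff f u a b⟫ := by
      have hr := hdNrange W'
      obtain ⟨x, hx⟩ := hr
      have := hsffnormal u hu x a b
      rw [show g u x = _ from hx] at this
      rw [inner_add_left] at this
      linarith [this]
    have e3 : ⟪g2 u W' (c u), sff f u a b⟫ = ⟪sff f u X₀ W', sff f u a b⟫ := by
      have hsplit2 : g2 u W' (c u) = sff f u W' (c u)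
          + (Submodule.orthogonalProjectionOnto (LinearMap.range (fderiv ℝ f u : EuclideanSpace ℝ (Fin n) →ₗ[ℝ] EuclideanSpace ℝ (Fin m))) (g2 u W' (c u)) :
              EuclideanSpace ℝ (Fin m)) := by
        rw [sff, tangentProj]
        abel
      have hPmem2 : (Submodule.orthogonalProjectionOnto (LinearMap.range (fderiv ℝ f u : EuclideanSpace ℝ (Fin n) →ₗ[ℝ] EuclideanSpace ℝ (Fin m))) (g2 u W' (c u)) :
          EuclideanSpace ℝ (Fin m)) ∈ LinearMap.range (g u : EuclideanSpace ℝ (Fin n) →ₗ[ℝ] EuclideanSpace ℝ (Fin m)) :=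
        (Submodule.orthogonalProjectionOnto (LinearMap.range (fderiv ℝ f u : EuclideanSpace ℝ (Fin n) →ₗ[ℝ] EuclideanSpace ℝ (Fin m))) (g2 u W' (c u))).2
      obtain ⟨x, hx⟩ := hPmem2
      have hPz : ⟪(Submodule.orthogonalProjectionOnto (LinearMap.range (fderiv ℝ f u : EuclideanSpace ℝ (Fin n) →ₗ[ℝ] EuclideanSpace ℝ (Fin m))) (g2 u W' (c u)) :
          EuclideanSpace ℝ (Fin m)), sff f u a b⟫ = 0 := by
        rw [← hx]
        exact hsffnormal u hu x a b
      rw [hsplit2, inner_add_left, hPz, add_zero]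
      have hswap : sff f u W' (c u) = sff f u (c u) W' := by
        rw [sff, sff, sym2 u hu W' (c u)]
      rw [hswap, hc0]
    -- combine
    have : (0 : ℝ) = ⟪Nf u, g3 u W' a b⟫ + ⟪dN W', g2 u a b⟫ := hthis
    rw [e1, e2, e3] at this
    linarith [this]
  -- symmetry of the third derivative
  have symA : ∀ a b : EuclideanSpace ℝ (Fin n), g3 u a b = g3 u b a := fun a b =>
    (hgc.isSymmSndFDerivAt (by simp [minSmoothness_of_isRCLikeNormedField])) a b
  have symB : ∀ a b b' : EuclideanSpace ℝ (Fin n), g3 u a b b' = g3 u a b' b := by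
    intro a b b'
    have hev : (fun v => g2 v b b') =ᶠ[nhds u] (fun v => g2 v b' b) :=
      Filter.eventuallyEq_of_mem hUnhds (fun v hv => sym2 v hv b b')
    have heq : fderiv ℝ (fun v => g2 v b b') u = fderiv ℝ (fun v => g2 v b' b) u :=
      hev.fderiv_eq
    rw [(hg2ab b b').fderiv, (hg2ab b' b).fderiv] at heq
    have happ := congrArg (fun T : EuclideanSpace ℝ (Fin n) →L[ℝ]
      EuclideanSpace ℝ (Fin m) => T a) heq
    simpa using happ
  have hsym3 : g3 u W Y Z = g3 u Z Y W := by
    calc g3 u W Y Z = g3 u Y W Z := by rw [symA W Y]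
      _ = g3 u Y Z W := symB Y W Z
      _ = g3 u Z Y W := by rw [symA Y Z]
  have h1 := hmain Y Z W
  have h2 := hmain Y W Z
  rw [← h1, ← h2, hsym3]
end

section
/- Let f : U → ℝᵐ be a proper rectifying smooth immersion of a connected open set U ⊆ ℝⁿ. Fix u ∈ U and let X₀ ∈ ℝⁿ be the unique vector with fderiv ℝ f u X₀ = x^T(u). Then for every Z ∈ ℝⁿ one has ⟪h_u(X₀, X₀), h_u(Z, Z)⟫ = ‖h_u(X₀, Z)‖². (Theorem 5.1(f): by the Gauss equation, the sectional curvature of M satisfies K(x^T, Z) = 0 for every tangent direction Z perpendicular to x^T.) -/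
open scoped RealInnerProductSpace

section Aux

variable {n m : ℕ}

private lemma isUnit_gram (A : EuclideanSpace ℝ (Fin n) →L[ℝ] EuclideanSpace ℝ (Fin m))
    (hA : Function.Injective A) :
    IsUnit ((ContinuousLinearMap.adjoint A).comp A) := by
  set G := (ContinuousLinearMap.adjoint A).comp A with hGdef
  have hker : ∀ z, G z = 0 → z = 0 := by
    intro z hz
    have h2 := ContinuousLinearMap.adjoint_inner_left A z (A z)
    have h1 : ⟪A z, A z⟫ = 0 := by
      rw [← h2, show ContinuousLinearMap.adjoint A (A z) = G z from rfl, hz, inner_zero_left]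
    have hz0 : A z = 0 := inner_self_eq_zero.mp h1
    exact hA (by simpa using hz0)
  have hinj : Function.Injective G := by
    intro x y hxy
    exact sub_eq_zero.mp (hker (x - y) (by simp [map_sub, hxy]))
  have hsurj : Function.Surjective G :=
    (LinearMap.injective_iff_surjective
      (f := (G : EuclideanSpace ℝ (Fin n) →ₗ[ℝ] EuclideanSpace ℝ (Fin n)))).mp hinj
  let e : EuclideanSpace ℝ (Fin n) ≃ₗ[ℝ] EuclideanSpace ℝ (Fin n) :=
    LinearEquiv.ofBijective
      (G : EuclideanSpace ℝ (Fin n) →ₗ[ℝ] EuclideanSpace ℝ (Fin n)) ⟨hinj, hsurj⟩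
  exact ⟨e.toContinuousLinearEquiv.toUnit, by ext x; rfl⟩

private lemma gram_inverse_apply (A : EuclideanSpace ℝ (Fin n) →L[ℝ] EuclideanSpace ℝ (Fin m))
    (hA : Function.Injective A) (x : EuclideanSpace ℝ (Fin n)) :
    ((ContinuousLinearMap.adjoint A).comp A)
      (Ring.inverse ((ContinuousLinearMap.adjoint A).comp A) x) = x := by
  have h1 : ((ContinuousLinearMap.adjoint A).comp A) *
      Ring.inverse ((ContinuousLinearMap.adjoint A).comp A) = 1 :=
    Ring.mul_inverse_cancel _ (isUnit_gram A hA)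
  have h2 := congrArg
    (fun L : EuclideanSpace ℝ (Fin n) →L[ℝ] EuclideanSpace ℝ (Fin n) => L x) h1
  simpa [ContinuousLinearMap.mul_apply] using h2

private lemma proj_formula_s11 (A : EuclideanSpace ℝ (Fin n) →L[ℝ] EuclideanSpace ℝ (Fin m))
    (hA : Function.Injective A) (w : EuclideanSpace ℝ (Fin m)) :
    (Submodule.orthogonalProjectionOnto (LinearMap.range (A : EuclideanSpace ℝ (Fin n) →ₗ[ℝ] EuclideanSpace ℝ (Fin m))) w : EuclideanSpace ℝ (Fin m))
      = A (Ring.inverse ((ContinuousLinearMap.adjoint A).comp A)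
          ((ContinuousLinearMap.adjoint A) w)) := by
  rw [← Submodule.starProjection_apply]
  apply Submodule.eq_starProjection_of_mem_of_inner_eq_zero
  · exact LinearMap.mem_range.2 ⟨_, rfl⟩
  · rintro w' ⟨y, rfl⟩
    rw [ContinuousLinearMap.coe_coe, ← ContinuousLinearMap.adjoint_inner_left]
    have h0 : ContinuousLinearMap.adjoint A
        (w - A (Ring.inverse ((ContinuousLinearMap.adjoint A).comp A)
          ((ContinuousLinearMap.adjoint A) w))) = 0 := by
      rw [map_sub]
      rw [show ContinuousLinearMap.adjoint A
          (A (Ring.inverse ((ContinuousLinearMap.adjoint A).comp A)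
            ((ContinuousLinearMap.adjoint A) w)))
        = ((ContinuousLinearMap.adjoint A).comp A)
            (Ring.inverse ((ContinuousLinearMap.adjoint A).comp A)
              ((ContinuousLinearMap.adjoint A) w)) from rfl]
      rw [gram_inverse_apply A hA, sub_self]
    rw [h0, inner_zero_left]

end Aux

set_option maxHeartbeats 1000000 in
/-- **Theorem 5.1(f).** Let `f : U → ℝᵐ` be a proper rectifying smooth immersion, `u ∈ U`,
and `X₀` the tangent vector with `fderiv ℝ f u X₀ = x^T(u)`. Then
`⟪h(X₀,X₀), h(Z,Z)⟫ = ‖h(X₀,Z)‖²` for every `Z`; by the Gauss equation this says the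
sectional curvature `K(x^T, Z)` vanishes for every direction `Z` perpendicular to `x^T`. -/
theorem stmt_11 {n m : ℕ} (hn : 0 < n) (hnm : n < m)
    (U : Set (EuclideanSpace ℝ (Fin n))) (hU : IsOpen U) (hUconn : IsConnected U)
    (f : EuclideanSpace ℝ (Fin n) → EuclideanSpace ℝ (Fin m))
    (hf : ContDiffOn ℝ (⊤ : ℕ∞) f U)
    (himm : ∀ u ∈ U, Function.Injective (fderiv ℝ f u))
    (hrect : ∀ u ∈ U, ∀ X Y : EuclideanSpace ℝ (Fin n), ⟪f u, sff f u X Y⟫ = 0)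
    (hT : ∀ u ∈ U, posT f u ≠ 0) (hN : ∀ u ∈ U, posN f u ≠ 0)
    (u : EuclideanSpace ℝ (Fin n)) (hu : u ∈ U)
    (X₀ : EuclideanSpace ℝ (Fin n)) (hX₀ : fderiv ℝ f u X₀ = posT f u) :
    ∀ Z : EuclideanSpace ℝ (Fin n),
      ⟪sff f u X₀ X₀, sff f u Z Z⟫ = ‖sff f u X₀ Z‖ ^ 2 := by
  intro Z
  classical
  have hmem : U ∈ nhds u := hU.mem_nhds hu
  -- differentiability of f, its first and second derivative maps
  have hFcd : ContDiffOn ℝ (⊤ : ℕ∞) (fderiv ℝ f) U := by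
    exact hf.fderiv_of_isOpen (m := (⊤ : ℕ∞)) hU (by simp)
  have hHcd : ContDiffOn ℝ (⊤ : ℕ∞) (fderiv ℝ (fderiv ℝ f)) U := by
    exact hFcd.fderiv_of_isOpen (m := (⊤ : ℕ∞)) hU (by simp)
  have hfd : ∀ v ∈ U, DifferentiableAt ℝ f v := fun v hv =>
    (hf.contDiffAt (hU.mem_nhds hv)).differentiableAt (by simp)
  have hFd : ∀ v ∈ U, DifferentiableAt ℝ (fderiv ℝ f) v := fun v hv =>
    (hFcd.contDiffAt (hU.mem_nhds hv)).differentiableAt (by simp)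
  have hHd : DifferentiableAt ℝ (fderiv ℝ (fderiv ℝ f)) u :=
    (hHcd.contDiffAt hmem).differentiableAt (by simp)
  have hfdu := hfd u hu
  have hFdu := hFd u hu
  -- symmetry of the second derivative of f and of fderiv f
  have hfev : ∀ᶠ v in nhds u, HasFDerivAt f (fderiv ℝ f v) v := by
    filter_upwards [hmem] with v hv using (hfd v hv).hasFDerivAt
  have hFev : ∀ᶠ v in nhds u, HasFDerivAt (fderiv ℝ f) (fderiv ℝ (fderiv ℝ f) v) v := by
    filter_upwards [hmem] with v hv using (hFd v hv).hasFDerivAt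
  have hsymmH : ∀ X Y, fderiv ℝ (fderiv ℝ f) u X Y = fderiv ℝ (fderiv ℝ f) u Y X :=
    fun X Y => second_derivative_symmetric_of_eventually hfev hFdu.hasFDerivAt X Y
  have hsymmT : ∀ X Y, fderiv ℝ (fderiv ℝ (fderiv ℝ f)) u X Y
      = fderiv ℝ (fderiv ℝ (fderiv ℝ f)) u Y X :=
    fun X Y => second_derivative_symmetric_of_eventually hFev hHd.hasFDerivAt X Y
  -- the adjoint as a continuous linear map
  set adjL : (EuclideanSpace ℝ (Fin n) →L[ℝ] EuclideanSpace ℝ (Fin m)) →L[ℝ]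
      (EuclideanSpace ℝ (Fin m) →L[ℝ] EuclideanSpace ℝ (Fin n)) :=
    LinearMap.mkContinuous
      { toFun := fun L => ContinuousLinearMap.adjoint L
        map_add' := fun a b => map_add ContinuousLinearMap.adjoint a b
        map_smul' := fun c L => by
          simpa using map_smulₛₗ (ContinuousLinearMap.adjoint
            (E := EuclideanSpace ℝ (Fin n)) (F := EuclideanSpace ℝ (Fin m))) c L }
      1 (fun L => by
        rw [one_mul]
        exact le_of_eq (ContinuousLinearMap.adjoint.norm_map L)) with hadjLdef
  have hadjL_apply : ∀ L, adjL L = ContinuousLinearMap.adjoint L := fun L => rfl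
  -- the tangential-component vector field
  set Wf : EuclideanSpace ℝ (Fin n) → EuclideanSpace ℝ (Fin n) :=
    fun v => Ring.inverse ((adjL (fderiv ℝ f v)).comp (fderiv ℝ f v))
      ((adjL (fderiv ℝ f v)) (f v)) with hWfdef
  have ht_eq : ∀ v ∈ U, fderiv ℝ f v (Wf v) = tangentProj f v (f v) := by
    intro v hv
    rw [tangentProj, proj_formula_s11 (fderiv ℝ f v) (himm v hv) (f v)]
    rfl
  -- differentiability of Wf at u
  have hadj : DifferentiableAt ℝ (fun v => adjL (fderiv ℝ f v)) u :=
    (differentiableAt_const adjL).clm_apply hFdu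
  have hGmd : DifferentiableAt ℝ
      (fun v => (adjL (fderiv ℝ f v)).comp (fderiv ℝ f v)) u := hadj.clm_comp hFdu
  have hGmu : IsUnit ((adjL (fderiv ℝ f u)).comp (fderiv ℝ f u)) :=
    isUnit_gram (fderiv ℝ f u) (himm u hu)
  have hinvd : DifferentiableAt ℝ
      (fun v => Ring.inverse ((adjL (fderiv ℝ f v)).comp (fderiv ℝ f v))) u := by
    have h1 := (differentiableAt_inverse hGmu).comp u hGmd
    simpa [Function.comp_def] using h1
  have hWd : DifferentiableAt ℝ Wf u := hinvd.clm_apply (hadj.clm_apply hfdu)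
  have hW' := hWd.hasFDerivAt
  -- derivative of g := f - (tangential component)
  have htf : HasFDerivAt (fun v => fderiv ℝ f v (Wf v))
      ((fderiv ℝ f u).comp (fderiv ℝ Wf u)
        + (fderiv ℝ (fderiv ℝ f) u).flip (Wf u)) u :=
    hFdu.hasFDerivAt.clm_apply hW'
  have hg' : HasFDerivAt (fun v => f v - fderiv ℝ f v (Wf v))
      (fderiv ℝ f u - ((fderiv ℝ f u).comp (fderiv ℝ Wf u)
        + (fderiv ℝ (fderiv ℝ f) u).flip (Wf u))) u :=
    hfdu.hasFDerivAt.sub htf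
  have hWu : Wf u = X₀ := by
    apply himm u hu
    rw [hX₀]
    exact ht_eq u hu
  -- orthogonality relations valid on all of U
  have hgF : ∀ v ∈ U, ∀ Y, ⟪f v - fderiv ℝ f v (Wf v), fderiv ℝ f v Y⟫ = 0 := by
    intro v hv Y
    rw [ht_eq v hv]
    exact (Submodule.mem_orthogonal' _ _).1
      (Submodule.sub_starProjection_mem_orthogonal (K := LinearMap.range (fderiv ℝ f v : EuclideanSpace ℝ (Fin n) →ₗ[ℝ] EuclideanSpace ℝ (Fin m))) (f v))
      _ (LinearMap.mem_range.2 ⟨Y, rfl⟩)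
  have hgH : ∀ v ∈ U, ∀ X Y,
      ⟪f v - fderiv ℝ f v (Wf v), fderiv ℝ (fderiv ℝ f) v X Y⟫ = 0 := by
    intro v hv X Y
    rw [ht_eq v hv]
    have h2 : ⟪tangentProj f v (f v), fderiv ℝ (fderiv ℝ f) v X Y⟫
        = ⟪f v, tangentProj f v (fderiv ℝ (fderiv ℝ f) v X Y)⟫ :=
      Submodule.inner_starProjection_left_eq_right (LinearMap.range (fderiv ℝ f v : EuclideanSpace ℝ (Fin n) →ₗ[ℝ] EuclideanSpace ℝ (Fin m))) (f v) (fderiv ℝ (fderiv ℝ f) v X Y)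
    have h3 : (⟪f v, fderiv ℝ (fderiv ℝ f) v X Y⟫
        - ⟪f v, tangentProj f v (fderiv ℝ (fderiv ℝ f) v X Y)⟫ : ℝ) = 0 := by
      rw [← inner_sub_right]
      exact hrect v hv X Y
    rw [inner_sub_left, h2]
    linarith
  -- tangential projections lie in the range, sff is normal
  have htanmem : ∀ w, tangentProj f u w ∈ LinearMap.range (fderiv ℝ f u : EuclideanSpace ℝ (Fin n) →ₗ[ℝ] EuclideanSpace ℝ (Fin m)) := fun w =>
    (Submodule.orthogonalProjectionOnto (LinearMap.range (fderiv ℝ f u : EuclideanSpace ℝ (Fin n) →ₗ[ℝ] EuclideanSpace ℝ (Fin m))) w).2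
  have hsffperp : ∀ X Y W', (⟪fderiv ℝ f u W', sff f u X Y⟫ : ℝ) = 0 := fun X Y W' =>
    (Submodule.mem_orthogonal _ _).1
      (Submodule.sub_starProjection_mem_orthogonal
        (K := LinearMap.range (fderiv ℝ f u : EuclideanSpace ℝ (Fin n) →ₗ[ℝ] EuclideanSpace ℝ (Fin m))) (fderiv ℝ (fderiv ℝ f) u X Y))
      _ (LinearMap.mem_range.2 ⟨W', rfl⟩)
  -- the derivative of g is normal at u
  have hgperp : ∀ d Y, (⟪(fderiv ℝ f u - ((fderiv ℝ f u).comp (fderiv ℝ Wf u)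
        + (fderiv ℝ (fderiv ℝ f) u).flip (Wf u))) d, fderiv ℝ f u Y⟫ : ℝ) = 0 := by
    intro d Y
    have hFY : HasFDerivAt (fun v => fderiv ℝ f v Y)
        ((fderiv ℝ f u).comp (0 : EuclideanSpace ℝ (Fin n) →L[ℝ] EuclideanSpace ℝ (Fin n))
          + (fderiv ℝ (fderiv ℝ f) u).flip Y) u :=
      hFdu.hasFDerivAt.clm_apply (hasFDerivAt_const Y u)
    have hin := (hg'.inner ℝ hFY)
    have hev : (fun _ : EuclideanSpace ℝ (Fin n) => (0 : ℝ))
        =ᶠ[nhds u] (fun v => ⟪f v - fderiv ℝ f v (Wf v), fderiv ℝ f v Y⟫) := by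
      filter_upwards [hmem] with v hv using (hgF v hv Y).symm
    have h0 := (hin.congr_of_eventuallyEq hev).unique (hasFDerivAt_const 0 u)
    have h6 := congrArg (fun (L : EuclideanSpace ℝ (Fin n) →L[ℝ] ℝ) => L d) h0
    simp only [ContinuousLinearMap.comp_apply, ContinuousLinearMap.prod_apply,
      fderivInnerCLM_apply, ContinuousLinearMap.zero_apply, ContinuousLinearMap.add_apply,
      ContinuousLinearMap.flip_apply, map_zero, zero_add] at h6
    have h7 := hgH u hu d Y
    -- h6 : ⟪g u, H u d Y⟫ + ⟪G' d, F u Y⟫ = 0  (up to arrangement)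
    linarith [h6, h7]
  -- evaluation of the formal derivative of g
  have hG'app : ∀ d, (fderiv ℝ f u - ((fderiv ℝ f u).comp (fderiv ℝ Wf u)
        + (fderiv ℝ (fderiv ℝ f) u).flip (Wf u))) d
      = fderiv ℝ f u d - (fderiv ℝ f u (fderiv ℝ Wf u d)
          + fderiv ℝ (fderiv ℝ f) u d X₀) := by
    intro d
    simp [hWu]
  -- main key identity
  have keyI : ∀ d X Y, (⟪sff f u d X₀, sff f u X Y⟫ : ℝ)
      = ⟪f u - fderiv ℝ f u (Wf u), fderiv ℝ (fderiv ℝ (fderiv ℝ f)) u d X Y⟫ := by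
    intro d X Y
    have h₁ := hHd.hasFDerivAt.clm_apply (hasFDerivAt_const X u)
    have h₂ := h₁.clm_apply (hasFDerivAt_const Y u)
    have hin := hg'.inner ℝ h₂
    have hev : (fun _ : EuclideanSpace ℝ (Fin n) => (0 : ℝ))
        =ᶠ[nhds u] (fun v => ⟪f v - fderiv ℝ f v (Wf v), fderiv ℝ (fderiv ℝ f) v X Y⟫) := by
      filter_upwards [hmem] with v hv using (hgH v hv X Y).symm
    have h0 := (hin.congr_of_eventuallyEq hev).unique (hasFDerivAt_const 0 u)
    have h6 := congrArg (fun (L : EuclideanSpace ℝ (Fin n) →L[ℝ] ℝ) => L d) h0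
    simp only [ContinuousLinearMap.comp_apply, ContinuousLinearMap.prod_apply,
      fderivInnerCLM_apply, ContinuousLinearMap.zero_apply, ContinuousLinearMap.add_apply,
      ContinuousLinearMap.flip_apply, ContinuousLinearMap.sub_apply, map_zero, zero_add,
      add_zero] at h6
    rw [hWu] at h6
    rw [hWu]
    obtain ⟨Y', hY'⟩ := htanmem (fderiv ℝ (fderiv ℝ f) u X Y)
    obtain ⟨Y'', hY''⟩ := htanmem (fderiv ℝ (fderiv ℝ f) u d X₀)
    have e1 : (⟪fderiv ℝ f u d - (fderiv ℝ f u (fderiv ℝ Wf u d)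
          + fderiv ℝ (fderiv ℝ f) u d X₀),
        fderiv ℝ (fderiv ℝ f) u X Y⟫ : ℝ)
        = -⟪sff f u d X₀, sff f u X Y⟫ := by
      have hXY : fderiv ℝ (fderiv ℝ f) u X Y
          = sff f u X Y + tangentProj f u (fderiv ℝ (fderiv ℝ f) u X Y) := by
        simp [sff]
      have hdX : fderiv ℝ (fderiv ℝ f) u d X₀
          = sff f u d X₀ + tangentProj f u (fderiv ℝ (fderiv ℝ f) u d X₀) := by
        simp [sff]
      rw [hXY, inner_add_right]
      have hz1 : (⟪fderiv ℝ f u d - (fderiv ℝ f u (fderiv ℝ Wf u d)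
            + fderiv ℝ (fderiv ℝ f) u d X₀),
          tangentProj f u (fderiv ℝ (fderiv ℝ f) u X Y)⟫ : ℝ) = 0 := by
        rw [← hY']
        have h9 := hgperp d Y'
        rw [hG'app d] at h9
        exact h9
      rw [hz1, add_zero, inner_sub_left, inner_add_left, hsffperp X Y d,
        hsffperp X Y (fderiv ℝ Wf u d), hdX, inner_add_left]
      have hz2 : (⟪tangentProj f u (fderiv ℝ (fderiv ℝ f) u d X₀), sff f u X Y⟫ : ℝ) = 0 := by
        rw [← hY'']
        exact hsffperp X Y Y''
      rw [hz2]
      ring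
    rw [e1] at h6
    linarith [h6]
  -- final assembly via symmetry of the third derivative
  calc (⟪sff f u X₀ X₀, sff f u Z Z⟫ : ℝ)
      = ⟪f u - fderiv ℝ f u (Wf u), fderiv ℝ (fderiv ℝ (fderiv ℝ f)) u X₀ Z Z⟫ :=
        keyI X₀ Z Z
    _ = ⟪f u - fderiv ℝ f u (Wf u), fderiv ℝ (fderiv ℝ (fderiv ℝ f)) u Z X₀ Z⟫ := by
        rw [hsymmT X₀ Z]
    _ = ⟪sff f u Z X₀, sff f u X₀ Z⟫ := (keyI Z X₀ Z).symm
    _ = ⟪sff f u X₀ Z, sff f u X₀ Z⟫ := by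
        have h4 : sff f u Z X₀ = sff f u X₀ Z := by
          simp only [sff]
          rw [hsymmH Z X₀]
        rw [h4]
    _ = ‖sff f u X₀ Z‖ ^ 2 := real_inner_self_eq_norm_sq _
end

section
/- Let f : U → ℝᵐ be a proper rectifying smooth immersion of a connected open set U ⊆ ℝⁿ, and let e₁ : U → ℝᵐ denote the unit tangential position field e₁(u) := x^T(u)/‖x^T(u)‖. Then for every u ∈ U and every X ∈ ℝⁿ the tangential component of the ambient derivative of e₁ satisfies P_u( fderiv ℝ (fun v => e₁(v)) u X ) = ‖x^T(u)‖⁻¹ • ( fderiv ℝ f u X − ⟪fderiv ℝ f u X, e₁(u)⟫ • e₁(u) ). In particular, taking X with fderiv ℝ f u X = e₁(u) shows ∇_{e₁} e₁ = 0, so the integral curves of e₁ are geodesics of M, and the tangent directions orthogonal to e₁ satisfy ∇_X e₁ = X/‖x^T‖. (Equations (4.20) and (4.22) in the proof of Theorem 4.2.) -/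
open scoped RealInnerProductSpace

/-- The adjoint, bundled as a continuous linear map between operator spaces. -/
noncomputable def adjCLM (n m : ℕ) :
    (EuclideanSpace ℝ (Fin n) →L[ℝ] EuclideanSpace ℝ (Fin m)) →L[ℝ]
      (EuclideanSpace ℝ (Fin m) →L[ℝ] EuclideanSpace ℝ (Fin n)) :=
  LinearMap.mkContinuous
    { toFun := ContinuousLinearMap.adjoint
      map_add' := fun A B => map_add _ A B
      map_smul' := fun c A => by
        simp [LinearIsometryEquiv.map_smulₛₗ, starRingEnd_apply, star_trivial] }
    1 (fun A => by simp [LinearIsometryEquiv.norm_map])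

set_option maxHeartbeats 1000000 in
/-- **Equations (4.20) and (4.22) in the proof of Theorem 4.2.** For a proper rectifying
smooth immersion `f : U → ℝᵐ`, the unit tangential position field `e₁ = x^T/‖x^T‖`
satisfies, for every direction `X`,
`P_u(∇̃_X e₁) = ‖x^T‖⁻¹ • (f_* X − ⟪f_* X, e₁⟫ e₁)`.
In particular `∇_{e₁} e₁ = 0` and `∇_X e₁ = X/‖x^T‖` for `X ⊥ e₁`. -/
theorem stmt_12 {n m : ℕ} (hn : 0 < n) (hnm : n < m)
    (U : Set (EuclideanSpace ℝ (Fin n))) (hU : IsOpen U) (hUconn : IsConnected U)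
    (f : EuclideanSpace ℝ (Fin n) → EuclideanSpace ℝ (Fin m))
    (hf : ContDiffOn ℝ (⊤ : ℕ∞) f U)
    (himm : ∀ u ∈ U, Function.Injective (fderiv ℝ f u))
    (hrect : ∀ u ∈ U, ∀ X Y : EuclideanSpace ℝ (Fin n), ⟪f u, sff f u X Y⟫ = 0)
    (hT : ∀ u ∈ U, posT f u ≠ 0) (hN : ∀ u ∈ U, posN f u ≠ 0) :
    ∀ u ∈ U, ∀ X : EuclideanSpace ℝ (Fin n),
      tangentProj f u (fderiv ℝ (fun v => ‖posT f v‖⁻¹ • posT f v) u X)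
        = ‖posT f u‖⁻¹ •
            (fderiv ℝ f u X
              - ⟪fderiv ℝ f u X, ‖posT f u‖⁻¹ • posT f u⟫ • (‖posT f u‖⁻¹ • posT f u)) := by
  intro u hu X
  classical
  have hUnhds : U ∈ nhds u := hU.mem_nhds hu
  have hfc : ContDiffAt ℝ (⊤ : ℕ∞) f u := hf.contDiffAt hUnhds
  have hDc : ContDiffAt ℝ (⊤ : ℕ∞) (fderiv ℝ f) u := hfc.fderiv_right (by simp)
  -- invertibility of the Gram operator
  have hunit : ∀ v ∈ U, IsUnit ((adjCLM n m (fderiv ℝ f v)).comp (fderiv ℝ f v)) := by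
    intro v hv
    have hinj : Function.Injective ((adjCLM n m (fderiv ℝ f v)).comp (fderiv ℝ f v)) := by
      intro x y hxy
      have h0 : ContinuousLinearMap.adjoint (fderiv ℝ f v) ((fderiv ℝ f v) (x - y)) = 0 := by
        show ((adjCLM n m (fderiv ℝ f v)).comp (fderiv ℝ f v)) (x - y) = 0
        rw [map_sub, hxy, sub_self]
      have h1 : ⟪(fderiv ℝ f v) (x - y), (fderiv ℝ f v) (x - y)⟫ = 0 := by
        rw [← ContinuousLinearMap.adjoint_inner_left (fderiv ℝ f v) (x - y)
          ((fderiv ℝ f v) (x - y)), h0, inner_zero_left]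
      have h2 : (fderiv ℝ f v) (x - y) = 0 := by rwa [inner_self_eq_zero] at h1
      have h3 : x - y = 0 := himm v hv (by rw [h2, map_zero])
      exact sub_eq_zero.mp h3
    have hsurj : Function.Surjective ((adjCLM n m (fderiv ℝ f v)).comp (fderiv ℝ f v)) :=
      LinearMap.injective_iff_surjective.mp hinj
    exact ⟨((LinearEquiv.ofBijective
      (((adjCLM n m (fderiv ℝ f v)).comp (fderiv ℝ f v) : _ →ₗ[ℝ] _))
      ⟨hinj, hsurj⟩).toContinuousLinearEquiv).toUnit, by ext x; rfl⟩
  obtain ⟨Gu, hGu⟩ := hunit u hu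
  -- smoothness of the projection formula
  have hadjc : ContDiffAt ℝ (⊤ : ℕ∞) (fun v => adjCLM n m (fderiv ℝ f v)) u :=
    ((adjCLM n m).contDiff.contDiffAt).comp u hDc
  have hGc : ContDiffAt ℝ (⊤ : ℕ∞) (fun v => (adjCLM n m (fderiv ℝ f v)).comp (fderiv ℝ f v)) u :=
    hadjc.clm_comp hDc
  have hinvc : ContDiffAt ℝ (⊤ : ℕ∞)
      (fun v => Ring.inverse ((adjCLM n m (fderiv ℝ f v)).comp (fderiv ℝ f v))) u := by
    have h1 : ContDiffAt ℝ (⊤ : ℕ∞) Ring.inverse ((adjCLM n m (fderiv ℝ f u)).comp (fderiv ℝ f u)) := by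
      rw [← hGu]; exact contDiffAt_ringInverse ℝ Gu
    exact h1.comp u hGc
  have hQc : ContDiffAt ℝ (⊤ : ℕ∞) (fun v => (fderiv ℝ f v)
      (Ring.inverse ((adjCLM n m (fderiv ℝ f v)).comp (fderiv ℝ f v))
        ((adjCLM n m (fderiv ℝ f v)) (f v)))) u :=
    hDc.clm_apply (hinvc.clm_apply (hadjc.clm_apply hfc))
  -- explicit formula for the orthogonal projection
  have hproj : ∀ v ∈ U, ∀ w, tangentProj f v w = (fderiv ℝ f v)
      (Ring.inverse ((adjCLM n m (fderiv ℝ f v)).comp (fderiv ℝ f v))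
        ((adjCLM n m (fderiv ℝ f v)) w)) := by
    intro v hv w
    have hGunit := hunit v hv
    have hGG : ∀ z, ((adjCLM n m (fderiv ℝ f v)).comp (fderiv ℝ f v))
        (Ring.inverse ((adjCLM n m (fderiv ℝ f v)).comp (fderiv ℝ f v)) z) = z := by
      intro z
      have h1 : ((adjCLM n m (fderiv ℝ f v)).comp (fderiv ℝ f v)) *
          Ring.inverse ((adjCLM n m (fderiv ℝ f v)).comp (fderiv ℝ f v)) = 1 :=
        Ring.mul_inverse_cancel _ hGunit
      calc ((adjCLM n m (fderiv ℝ f v)).comp (fderiv ℝ f v))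
            (Ring.inverse ((adjCLM n m (fderiv ℝ f v)).comp (fderiv ℝ f v)) z)
          = (((adjCLM n m (fderiv ℝ f v)).comp (fderiv ℝ f v)) *
              Ring.inverse ((adjCLM n m (fderiv ℝ f v)).comp (fderiv ℝ f v))) z := rfl
        _ = z := by rw [h1]; rfl
    simp only [tangentProj]
    apply Submodule.eq_starProjection_of_mem_of_inner_eq_zero
    · exact LinearMap.mem_range.mpr ⟨_, rfl⟩
    · rintro z ⟨y, rfl⟩
      rw [inner_sub_left]
      have e1 : ⟪(fderiv ℝ f v) (Ring.inverse ((adjCLM n m (fderiv ℝ f v)).comp (fderiv ℝ f v))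
            ((adjCLM n m (fderiv ℝ f v)) w)), (fderiv ℝ f v) y⟫
          = ⟪w, (fderiv ℝ f v) y⟫ := by
        rw [← ContinuousLinearMap.adjoint_inner_left (fderiv ℝ f v) y]
        have : (ContinuousLinearMap.adjoint (fderiv ℝ f v))
            ((fderiv ℝ f v) (Ring.inverse ((adjCLM n m (fderiv ℝ f v)).comp (fderiv ℝ f v))
              ((adjCLM n m (fderiv ℝ f v)) w)))
            = (adjCLM n m (fderiv ℝ f v)) w := hGG _
        rw [this]
        exact ContinuousLinearMap.adjoint_inner_left (fderiv ℝ f v) y w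
      simp only [ContinuousLinearMap.coe_coe]; rw [e1, sub_self]
  -- differentiability of posT
  have hposT_eq : posT f =ᶠ[nhds u] (fun v => (fderiv ℝ f v)
      (Ring.inverse ((adjCLM n m (fderiv ℝ f v)).comp (fderiv ℝ f v))
        ((adjCLM n m (fderiv ℝ f v)) (f v)))) :=
    Filter.eventuallyEq_of_mem hUnhds (fun v hv => by
      simpa [posT] using hproj v hv (f v))
  have hposT_diff : DifferentiableAt ℝ (posT f) u :=
    (hQc.differentiableAt (by simp)).congr_of_eventuallyEq hposT_eq
  set B : EuclideanSpace ℝ (Fin n) →L[ℝ] EuclideanSpace ℝ (Fin m) :=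
    fderiv ℝ (posT f) u with hBdef
  have hBf : HasFDerivAt (posT f) B u := hposT_diff.hasFDerivAt
  have hfd : DifferentiableAt ℝ f u := hfc.differentiableAt (by simp)
  have hAf : HasFDerivAt f (fderiv ℝ f u) u := hfd.hasFDerivAt
  have hD2d : DifferentiableAt ℝ (fderiv ℝ f) u := hDc.differentiableAt (by simp)
  have hD2f : HasFDerivAt (fderiv ℝ f) (fderiv ℝ (fderiv ℝ f) u) u := hD2d.hasFDerivAt
  -- the key orthogonality relation
  have hkey : ∀ Y, ⟪(fderiv ℝ f u) X - B X, (fderiv ℝ f u) Y⟫ = 0 := by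
    intro Y
    have hAYf : HasFDerivAt (fun v => fderiv ℝ f v Y)
        ((fderiv ℝ (fderiv ℝ f) u).flip Y) u := by
      have h := hD2f.clm_apply (hasFDerivAt_const Y u)
      simpa using h
    have hgf : HasFDerivAt (fun v => (⟪f v - posT f v, fderiv ℝ f v Y⟫ : ℝ))
        ((fderivInnerCLM ℝ (f u - posT f u, fderiv ℝ f u Y)).comp
          (((fderiv ℝ f u) - B).prod ((fderiv ℝ (fderiv ℝ f) u).flip Y))) u :=
      HasFDerivAt.inner ℝ (hAf.sub hBf) hAYf
    have hg0 : (fun v => (⟪f v - posT f v, fderiv ℝ f v Y⟫ : ℝ)) =ᶠ[nhds u]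
        (fun _ => (0 : ℝ)) := by
      filter_upwards [hUnhds] with v hv
      have hmem : f v - (Submodule.orthogonalProjectionOnto (LinearMap.range (fderiv ℝ f v : EuclideanSpace ℝ (Fin n) →ₗ[ℝ] EuclideanSpace ℝ (Fin m))) (f v) :
          EuclideanSpace ℝ (Fin m)) ∈ (LinearMap.range (fderiv ℝ f v : EuclideanSpace ℝ (Fin n) →ₗ[ℝ] EuclideanSpace ℝ (Fin m)))ᗮ :=
        Submodule.sub_starProjection_mem_orthogonal (f v)
      have := (Submodule.mem_orthogonal' _ _).mp hmem (fderiv ℝ f v Y)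
        (LinearMap.mem_range.mpr ⟨Y, rfl⟩)
      simpa [posT, tangentProj] using this
    have hfder0 : fderiv ℝ (fun v => (⟪f v - posT f v, fderiv ℝ f v Y⟫ : ℝ)) u = 0 := by
      rw [hg0.fderiv_eq]; simp
    have h1 : ⟪f u - posT f u, (fderiv ℝ (fderiv ℝ f) u) X Y⟫
        + ⟪(fderiv ℝ f u) X - B X, (fderiv ℝ f u) Y⟫ = 0 := by
      have h2 := hgf.fderiv
      rw [hfder0] at h2
      have h3 := congrArg (fun (L : EuclideanSpace ℝ (Fin n) →L[ℝ] ℝ) => L X) h2.symm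
      simp only [ContinuousLinearMap.comp_apply, ContinuousLinearMap.prod_apply,
        ContinuousLinearMap.sub_apply, ContinuousLinearMap.flip_apply, fderivInnerCLM_apply,
        ContinuousLinearMap.zero_apply] at h3
      exact h3
    have hfirst : ⟪f u - posT f u, (fderiv ℝ (fderiv ℝ f) u) X Y⟫ = 0 := by
      have hsplit : (fderiv ℝ (fderiv ℝ f) u) X Y
          = sff f u X Y + tangentProj f u ((fderiv ℝ (fderiv ℝ f) u) X Y) := by
        simp only [sff]; abel
      rw [hsplit, inner_add_right]
      have hmemT : posT f u ∈ LinearMap.range (fderiv ℝ f u : EuclideanSpace ℝ (Fin n) →ₗ[ℝ] EuclideanSpace ℝ (Fin m)) := by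
        simp only [posT, tangentProj]; exact Submodule.coe_mem _
      have hsffO : sff f u X Y ∈ (LinearMap.range (fderiv ℝ f u : EuclideanSpace ℝ (Fin n) →ₗ[ℝ] EuclideanSpace ℝ (Fin m)))ᗮ := by
        simp only [sff, tangentProj]
        exact Submodule.sub_starProjection_mem_orthogonal _
      have hs1 : ⟪f u - posT f u, sff f u X Y⟫ = 0 := by
        rw [inner_sub_left, hrect u hu X Y, Submodule.inner_right_of_mem_orthogonal hmemT hsffO]
        ring
      have hs2 : ⟪f u - posT f u, tangentProj f u ((fderiv ℝ (fderiv ℝ f) u) X Y)⟫ = 0 := by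
        have hmemK : tangentProj f u ((fderiv ℝ (fderiv ℝ f) u) X Y)
            ∈ LinearMap.range (fderiv ℝ f u : EuclideanSpace ℝ (Fin n) →ₗ[ℝ] EuclideanSpace ℝ (Fin m)) := by
          simp only [tangentProj]; exact Submodule.coe_mem _
        have hmemO : f u - posT f u ∈ (LinearMap.range (fderiv ℝ f u : EuclideanSpace ℝ (Fin n) →ₗ[ℝ] EuclideanSpace ℝ (Fin m)))ᗮ := by
          simp only [posT, tangentProj]
          exact Submodule.sub_starProjection_mem_orthogonal _
        exact Submodule.inner_left_of_mem_orthogonal hmemK hmemO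
      rw [hs1, hs2]; ring
    linarith [h1, hfirst]
  -- tangential projection of B X is f_* X
  have hPB : tangentProj f u (B X) = (fderiv ℝ f u) X := by
    simp only [tangentProj]
    apply Submodule.eq_starProjection_of_mem_of_inner_eq_zero
    · exact LinearMap.mem_range.mpr ⟨X, rfl⟩
    · rintro z ⟨Y, rfl⟩
      have h := hkey Y
      have h' : ⟪B X - (fderiv ℝ f u) X, (fderiv ℝ f u) Y⟫
          = -⟪(fderiv ℝ f u) X - B X, (fderiv ℝ f u) Y⟫ := by
        rw [← inner_neg_left]; congr 1; abel
      simp only [ContinuousLinearMap.coe_coe]; rw [h', h, neg_zero]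
  -- inner products with posT agree
  have hmemT : posT f u ∈ LinearMap.range (fderiv ℝ f u : EuclideanSpace ℝ (Fin n) →ₗ[ℝ] EuclideanSpace ℝ (Fin m)) := by
    simp only [posT, tangentProj]; exact Submodule.coe_mem _
  have hABmem : (fderiv ℝ f u) X - B X ∈ (LinearMap.range (fderiv ℝ f u : EuclideanSpace ℝ (Fin n) →ₗ[ℝ] EuclideanSpace ℝ (Fin m)))ᗮ := by
    apply (Submodule.mem_orthogonal' _ _).mpr
    rintro z ⟨Y, rfl⟩
    simpa using hkey Y
  have he_inner : ⟪posT f u, B X⟫ = ⟪posT f u, (fderiv ℝ f u) X⟫ := by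
    have h0 : ⟪posT f u, (fderiv ℝ f u) X - B X⟫ = 0 :=
      Submodule.inner_right_of_mem_orthogonal hmemT hABmem
    rw [inner_sub_right] at h0; linarith
  -- projection of posT is itself
  have hPe : tangentProj f u (posT f u) = posT f u := by
    simp only [tangentProj, posT]
    exact congrArg Subtype.val (Submodule.orthogonalProjectionOnto_mem_subspace_eq_self _)
  -- norm facts
  have hρ : ‖posT f u‖ ≠ 0 := norm_ne_zero_iff.mpr (hT u hu)
  have hsu : (⟪posT f u, posT f u⟫ : ℝ) ≠ 0 := by
    rw [real_inner_self_eq_norm_mul_norm]; exact mul_ne_zero hρ hρ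
  have hsqrtu : Real.sqrt (⟪posT f u, posT f u⟫ : ℝ) = ‖posT f u‖ := by
    rw [real_inner_self_eq_norm_mul_norm, Real.sqrt_mul_self (norm_nonneg _)]
  -- derivative assembly
  have hsf : HasFDerivAt (fun v => (⟪posT f v, posT f v⟫ : ℝ))
      ((fderivInnerCLM ℝ (posT f u, posT f u)).comp (B.prod B)) u :=
    HasFDerivAt.inner ℝ hBf hBf
  have hnf : HasFDerivAt (fun v => ‖posT f v‖)
      ((1 / (2 * Real.sqrt (⟪posT f u, posT f u⟫ : ℝ))) •
        ((fderivInnerCLM ℝ (posT f u, posT f u)).comp (B.prod B))) u := by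
    have h := hsf.sqrt hsu
    have heq : (fun v => Real.sqrt (⟪posT f v, posT f v⟫ : ℝ)) = fun v => ‖posT f v‖ := by
      funext v; rw [real_inner_self_eq_norm_mul_norm, Real.sqrt_mul_self (norm_nonneg _)]
    rwa [heq] at h
  have hinvf : HasFDerivAt (fun v => ‖posT f v‖⁻¹)
      ((-(‖posT f u‖ ^ 2)⁻¹) • ((1 / (2 * Real.sqrt (⟪posT f u, posT f u⟫ : ℝ))) •
        ((fderivInnerCLM ℝ (posT f u, posT f u)).comp (B.prod B)))) u :=
    (hasDerivAt_inv hρ).comp_hasFDerivAt u hnf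
  have htot : HasFDerivAt (fun v => ‖posT f v‖⁻¹ • posT f v)
      (‖posT f u‖⁻¹ • B + ((-(‖posT f u‖ ^ 2)⁻¹) •
        ((1 / (2 * Real.sqrt (⟪posT f u, posT f u⟫ : ℝ))) •
          ((fderivInnerCLM ℝ (posT f u, posT f u)).comp (B.prod B)))).smulRight (posT f u)) u :=
    hinvf.smul hBf
  have hlin : ∀ (a b : ℝ) (w₁ w₂ : EuclideanSpace ℝ (Fin m)),
      tangentProj f u (a • w₁ + b • w₂)
        = a • tangentProj f u w₁ + b • tangentProj f u w₂ := by
    intro a b w₁ w₂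
    simp [tangentProj, map_add, map_smul]
  rw [htot.fderiv]
  simp only [ContinuousLinearMap.add_apply, ContinuousLinearMap.smul_apply,
    ContinuousLinearMap.smulRight_apply, ContinuousLinearMap.comp_apply,
    ContinuousLinearMap.prod_apply, fderivInnerCLM_apply, smul_eq_mul]
  rw [hlin, hPB, hPe]
  have he2 : (⟪B X, posT f u⟫ : ℝ) = ⟪posT f u, (fderiv ℝ f u) X⟫ := by
    rw [real_inner_comm]; exact he_inner
  simp only [hsqrtu, real_inner_smul_right,
    real_inner_comm ((fderiv ℝ f u) X) (posT f u), he2, he_inner]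
  match_scalars
  · field_simp
  · field_simp
    ring
end
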